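/- arXiv:1711.05566 — 9 statements merged into one kernel-verified Lean document; each statement's English description precedes it below -/
import Mathlib

section
/- (Mautner phenomenon) Let G be a group acting on a metric space X by uniformly Lipschitz maps, let N be a subgroup of G, and let u ∈ G be N-contracted in the sense that there is a sequence (a_n) in N with a_n⁻¹ u a_n → 1 in the sense that for every x ∈ X, d((a_n⁻¹ u a_n)·x, x) → 0. Then every point x ∈ X whose N-orbit has compact closure is fixed by u. -/
/-- Mautner phenomenon: if `u` is `N`-contracted (pointwise on `X`) for a
uniformly Lipschitz action, then every point with relatively compact `N`-orbit is fixed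
by `u`. -/
theorem stmt3 {G X : Type*} [Group G] [MetricSpace X] [MulAction G X]
    (C : ℝ) (hLip : ∀ (g : G) (x y : X), dist (g • x) (g • y) ≤ C * dist x y)
    (N : Subgroup G) (u : G) (a : ℕ → G) (ha : ∀ n, a n ∈ N)
    (hcontr : ∀ y : X,
      Filter.Tendsto (fun n => dist (((a n)⁻¹ * u * a n) • y) y) Filter.atTop (nhds 0))
    (x : X) (hx : IsCompact (closure {y : X | ∃ g ∈ N, g • x = y})) :
    u • x = x := by
  set C' : ℝ := max C 0 with hC'
  have hC'0 : 0 ≤ C' := le_max_right _ _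
  have hLip' : ∀ (g : G) (p q : X), dist (g • p) (g • q) ≤ C' * dist p q := fun g p q =>
    (hLip g p q).trans (mul_le_mul_of_nonneg_right (le_max_left _ _) dist_nonneg)
  set y : ℕ → X := fun n => (a n)⁻¹ • x with hy
  have hmem : ∀ n, y n ∈ closure {y : X | ∃ g ∈ N, g • x = y} := fun n =>
    subset_closure ⟨(a n)⁻¹, N.inv_mem (ha n), rfl⟩
  obtain ⟨z, hz, φ, hφ, hconv⟩ := hx.tendsto_subseq hmem
  -- key inequality
  have key : ∀ k, dist (u • x) x ≤
      C' * (dist (((a (φ k))⁻¹ * u * a (φ k)) • z) z + (C' + 1) * dist (y (φ k)) z) := by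
    intro k
    set n := φ k
    have h1 : dist (u • x) x ≤ C' * dist ((a n)⁻¹ • (u • x)) ((a n)⁻¹ • x) := by
      calc dist (u • x) x
          = dist (a n • ((a n)⁻¹ • (u • x))) (a n • ((a n)⁻¹ • x)) := by
            rw [smul_inv_smul, smul_inv_smul]
        _ ≤ C' * dist ((a n)⁻¹ • (u • x)) ((a n)⁻¹ • x) := hLip' _ _ _
    have h2 : (a n)⁻¹ • (u • x) = ((a n)⁻¹ * u * a n) • y n := by
      simp [hy, mul_smul]
    have h3 : dist (((a n)⁻¹ * u * a n) • y n) (y n) ≤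
        dist (((a n)⁻¹ * u * a n) • z) z + (C' + 1) * dist (y n) z := by
      calc dist (((a n)⁻¹ * u * a n) • y n) (y n)
          ≤ dist (((a n)⁻¹ * u * a n) • y n) (((a n)⁻¹ * u * a n) • z)
            + dist (((a n)⁻¹ * u * a n) • z) z + dist z (y n) := dist_triangle4 _ _ _ _
        _ ≤ C' * dist (y n) z + dist (((a n)⁻¹ * u * a n) • z) z + dist (y n) z := by
            rw [dist_comm z (y n)]
            gcongr
            exact hLip' _ _ _
        _ = dist (((a n)⁻¹ * u * a n) • z) z + (C' + 1) * dist (y n) z := by ring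
    calc dist (u • x) x ≤ C' * dist ((a n)⁻¹ • (u • x)) ((a n)⁻¹ • x) := h1
      _ = C' * dist (((a n)⁻¹ * u * a n) • y n) (y n) := by rw [h2]
      _ ≤ C' * (dist (((a n)⁻¹ * u * a n) • z) z + (C' + 1) * dist (y n) z) := by
          exact mul_le_mul_of_nonneg_left h3 hC'0
  have hlim : Filter.Tendsto
      (fun k => C' * (dist (((a (φ k))⁻¹ * u * a (φ k)) • z) z + (C' + 1) * dist (y (φ k)) z))
      Filter.atTop (nhds 0) := by
    have h1 : Filter.Tendsto (fun k => dist (((a (φ k))⁻¹ * u * a (φ k)) • z) z)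
        Filter.atTop (nhds 0) := (hcontr z).comp hφ.tendsto_atTop
    have h2 : Filter.Tendsto (fun k => dist (y (φ k)) z) Filter.atTop (nhds 0) :=
      tendsto_iff_dist_tendsto_zero.mp hconv
    have := (h1.add (h2.const_mul (C' + 1))).const_mul C'
    simpa using this
  have hle : dist (u • x) x ≤ 0 := ge_of_tendsto hlim (Filter.Eventually.of_forall key)
  have := le_antisymm hle dist_nonneg
  exact eq_of_dist_eq_zero this
end

section
/- Let G be a locally compact group acting on a Banach space V by a uniformly bounded representation such that every orbit has compact closure (almost periodic module). Then the action of G on V factors through a compact group: there exists a compact group K, a continuous homomorphism G → K with dense image, and a separately continuous action of K on V extending that of G. -/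
/-- A factorization of a representation `ρ` of `G` on `V` through a compact group:
a compact group `K`, a continuous homomorphism `G → K` with dense image, and a
separately continuous representation of `K` on `V` extending `ρ`. -/
structure CompactFactorization {G V : Type*} [Group G] [TopologicalSpace G]
    [NormedAddCommGroup V] [NormedSpace ℝ V] (ρ : G →* (V →L[ℝ] V)) where
  K : Type
  [grp : Group K]
  [top : TopologicalSpace K]
  [tgrp : IsTopologicalGroup K]
  [cpt : CompactSpace K]
  φ : G →* K
  σ : K →* (V →L[ℝ] V)
  cont_φ : Continuous φ
  dense_φ : DenseRange φ
  cont_σ : ∀ v : V, Continuous fun k => σ k v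
  factors : ∀ g : G, σ (φ g) = ρ g

/-!
The enveloping monoid of `ρ`, the closure of `ρ(G)` in `V → V` for the topology of pointwise
convergence, is compact by Tychonoff because every orbit is relatively compact. Uniform
boundedness makes each of its elements linear and bi-Lipschitz with a common constant; this
equicontinuity makes composition jointly continuous on it, and injectivity makes it a group: an
idempotent in the closure of the positive powers of `f` must be the identity, which exhibits an
inverse of `f` as a limit of powers. Inversion on a compact Hausdorff group with continuous
multiplication has closed graph, hence is continuous.
-/

open Function Set Filter
open scoped NNReal

section CompactMonoid

variable {M : Type*} [Monoid M] [TopologicalSpace M] [CompactSpace M] [T2Space M]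
  [ContinuousMul M]

theorem isUnit_of_forall_isLeftRegular (hM : ∀ a : M, IsLeftRegular a) (a : M) : IsUnit a := by
  set T := closure (range fun n : ℕ => a ^ (n + 1))
  have hT_mul : ∀ x ∈ T, ∀ y ∈ T, x * y ∈ T := by
    intro x hx y hy
    refine map_mem_closure₂ continuous_mul hx hy ?_
    rintro _ ⟨m, rfl⟩ _ ⟨n, rfl⟩
    exact ⟨m + n + 1, by rw [← pow_add]; ring_nf⟩
  obtain ⟨e, heT, hee⟩ := exists_idempotent_in_compact_subsemigroup continuous_mul_const T
    ⟨a ^ 1, subset_closure ⟨0, rfl⟩⟩ isClosed_closure.isCompact hT_mul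
  have he : e = 1 := hM e (show e * e = e * 1 by rw [hee, mul_one])
  have h_range : (range fun n : ℕ => a ^ (n + 1)) = (a * ·) '' range (a ^ ·) := by
    rw [← range_comp]; simp only [comp_def, pow_succ']
  obtain ⟨b, -, hab⟩ : (1 : M) ∈ (a * ·) '' closure (range (a ^ ·)) := by
    rw [← (continuous_const_mul a).isClosedMap.closure_image_eq_of_continuous
      (continuous_const_mul a), ← h_range, ← he]
    exact heT
  refine isUnit_iff_exists.2 ⟨b, hab, hM a ?_⟩
  simp only [← mul_assoc, hab, one_mul, mul_one]

theorem IsTopologicalGroup.of_compactSpace {G : Type*} [Group G] [TopologicalSpace G]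
    [CompactSpace G] [T2Space G] [ContinuousMul G] : IsTopologicalGroup G where
  continuous_inv := by
    refine continuous_iff_isClosed.2 fun F hF => ?_
    have h_graph : IsClosed ({p : G × G | p.1 * p.2 = 1} ∩ univ ×ˢ F) :=
      (isClosed_eq continuous_mul continuous_const).inter (isClosed_univ.prod hF)
    convert (h_graph.isCompact.image continuous_fst).isClosed using 1
    ext x
    simp [mul_eq_one_iff_inv_eq]

end CompactMonoid

theorem isClosed_setOfPred_antilipschitzWith {α β : Type*} [PseudoEMetricSpace α]
    [PseudoEMetricSpace β] (K : ℝ≥0) : IsClosed {f : α → β | AntilipschitzWith K f} := by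
  simp only [AntilipschitzWith, ofPred_forall]
  exact isClosed_iInter fun x => isClosed_iInter fun y => isClosed_le continuous_const <|
    (ENNReal.continuous_const_mul ENNReal.coe_ne_top).comp <|
      .edist (continuous_apply x) (continuous_apply y)

theorem AntilipschitzWith.of_leftInverse {α β : Type*} [PseudoEMetricSpace α]
    [PseudoEMetricSpace β] {K : ℝ≥0} {f : α → β} {g : β → α} (hg : LipschitzWith K g)
    (hgf : LeftInverse g f) : AntilipschitzWith K f := fun x y => by
  simpa only [hgf x, hgf y] using hg (f x) (f y)

theorem isClosed_setOfPred_isLinearMap (R M₁ M₂ : Type*) [Semiring R] [AddCommMonoid M₁]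
    [Module R M₁] [AddCommMonoid M₂] [Module R M₂] [TopologicalSpace M₂] [T2Space M₂]
    [ContinuousAdd M₂] [ContinuousConstSMul R M₂] :
    IsClosed {f : M₁ → M₂ | IsLinearMap R f} := by
  convert (isClosed_setOfPred_map_add M₁ M₂).inter (isClosed_setOfPred_map_smul M₁ M₂ (id : R → R))
  ext f
  exact ⟨fun h => ⟨h.1, h.2⟩, fun h => ⟨h.1, h.2⟩⟩

theorem isCompact_closure_range_of_forall {ι α : Type*} {β : α → Type*}
    [∀ a, TopologicalSpace (β a)] (F : ι → ∀ a, β a)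
    (hF : ∀ a, IsCompact (closure (range fun i => F i a))) : IsCompact (closure (range F)) := by
  refine (isCompact_univ_pi hF).of_isClosed_subset isClosed_closure <|
    closure_minimal ?_ (isClosed_set_pi fun a _ => isClosed_closure)
  rintro _ ⟨i, rfl⟩ a -
  exact subset_closure ⟨i, rfl⟩

theorem Submonoid.isLeftRegular_of_coe {M : Type*} [Monoid M] {S : Submonoid M} {a : S}
    (h : IsLeftRegular (a : M)) : IsLeftRegular a :=
  fun _ _ hab => Subtype.ext (h (congrArg Subtype.val hab))

namespace Submonoid

variable {M : Type*} [Monoid M] [TopologicalSpace M] (N : Submonoid M)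
  (hN : ContinuousOn (fun p : M × M => p.1 * p.2) (_root_.closure (N : Set M) ×ˢ _root_.closure N))

def topologicalClosureOfContinuousOn : Submonoid M where
  carrier := _root_.closure N
  one_mem' := _root_.subset_closure N.one_mem
  mul_mem' {a b} ha hb := by
    rw [← closure_prod_eq] at hN
    have h_mem : (a, b) ∈ _root_.closure ((N : Set M) ×ˢ N) := by
      rw [closure_prod_eq]; exact ⟨ha, hb⟩
    exact _root_.closure_mono (image_subset_iff.2 fun p hp => N.mul_mem hp.1 hp.2)
      (hN.image_closure ⟨_, h_mem, rfl⟩)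

theorem continuousMul_topologicalClosureOfContinuousOn :
    ContinuousMul (N.topologicalClosureOfContinuousOn hN) where
  continuous_mul := (hN.comp_continuous (continuous_subtype_val.prodMap continuous_subtype_val)
    fun p => ⟨p.1.2, p.2.2⟩).subtype_mk _

end Submonoid

namespace Function.End

variable {α : Type*}

instance [TopologicalSpace α] : TopologicalSpace (Function.End α) := Pi.topologicalSpace

instance [TopologicalSpace α] [T2Space α] : T2Space (Function.End α) := Pi.t2Space

theorem isLeftRegular_of_injective {f : Function.End α} (hf : Injective f) : IsLeftRegular f :=
  fun _ _ h => funext fun x => hf (congrFun h x)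

theorem continuousOn_mul_of_lipschitzWith [PseudoMetricSpace α] (K : ℝ≥0) :
    ContinuousOn (fun p : Function.End α × Function.End α => p.1 * p.2)
      ({f | LipschitzWith K f} ×ˢ univ) := by
  rintro ⟨f₀, g₀⟩ -
  refine continuousWithinAt_pi.2 fun x => tendsto_iff_dist_tendsto_zero.2 ?_
  have h_eval : ∀ y, Continuous fun f : Function.End α => f y := continuous_apply
  refine squeeze_zero' (Eventually.of_forall fun _ => dist_nonneg)
    (eventually_nhdsWithin_of_forall fun p hp => ?_) (g := fun p : Function.End α × Function.End α =>
      K * dist (p.2 x) (g₀ x) + dist (p.1 (g₀ x)) (f₀ (g₀ x))) ?_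
  · exact (dist_triangle _ (p.1 (g₀ x)) _).trans (add_le_add_left (hp.1.dist_le_mul _ _) _)
  · have h : Continuous fun p : Function.End α × Function.End α =>
        K * dist (p.2 x) (g₀ x) + dist (p.1 (g₀ x)) (f₀ (g₀ x)) :=
      ((((h_eval x).comp continuous_snd).dist continuous_const).const_mul _).add
        (((h_eval (g₀ x)).comp continuous_fst).dist continuous_const)
    simpa using (h.tendsto (f₀, g₀)).mono_left nhdsWithin_le_nhds

end Function.End

def ContinuousLinearMap.toEnd {R M : Type*} [Semiring R] [TopologicalSpace M] [AddCommMonoid M]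
    [Module R M] : (M →L[R] M) →* Function.End M where
  toFun f := ⇑f
  map_one' := rfl
  map_mul' _ _ := rfl

section Enveloping

variable {V : Type*} [NormedAddCommGroup V] [NormedSpace ℝ V]

def bilipschitzLinearMaps (C : ℝ≥0) : Set (Function.End V) :=
  {f | IsLinearMap ℝ f ∧ LipschitzWith C f ∧ AntilipschitzWith C f}

theorem isClosed_bilipschitzLinearMaps (C : ℝ≥0) :
    IsClosed (bilipschitzLinearMaps C : Set (Function.End V)) :=
  (isClosed_setOfPred_isLinearMap ℝ V V).inter
    ((isClosed_setOfPred_lipschitzWith C).inter (isClosed_setOfPred_antilipschitzWith C))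

variable {G : Type*} [Group G] (ρ : G →* (V →L[ℝ] V)) {C : ℝ≥0}

theorem toEnd_apply_mem_bilipschitzLinearMaps (hC : ∀ g, ‖ρ g‖₊ ≤ C) (g : G) :
    (ContinuousLinearMap.toEnd (ρ g) : Function.End V) ∈ bilipschitzLinearMaps C := by
  change ⇑(ρ g) ∈ bilipschitzLinearMaps C
  refine ⟨(ρ g).toLinearMap.isLinear, (ρ g).lipschitz.weaken (hC g),
    .of_leftInverse ((ρ g⁻¹).lipschitz.weaken (hC g⁻¹)) fun v => ?_⟩
  change (ρ g⁻¹ * ρ g) v = v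
  rw [← map_mul, inv_mul_cancel, map_one]
  rfl

theorem closure_range_subset_bilipschitzLinearMaps (hC : ∀ g, ‖ρ g‖₊ ≤ C) :
    closure (range (ContinuousLinearMap.toEnd.comp ρ)) ⊆ bilipschitzLinearMaps C :=
  (isClosed_bilipschitzLinearMaps C).closure_subset_iff.2 <|
    range_subset_iff.2 (toEnd_apply_mem_bilipschitzLinearMaps ρ hC)

variable (hC : ∀ g, ‖ρ g‖₊ ≤ C)

def envelopingMonoid : Submonoid (Function.End V) :=
  (MonoidHom.mrange (ContinuousLinearMap.toEnd.comp ρ)).topologicalClosureOfContinuousOn <|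
    (Function.End.continuousOn_mul_of_lipschitzWith C).mono <|
      prod_mono (fun _ hf => (closure_range_subset_bilipschitzLinearMaps ρ hC hf).2.1)
        (subset_univ _)

theorem envelopingMonoid_subset_bilipschitzLinearMaps :
    (envelopingMonoid ρ hC : Set (Function.End V)) ⊆ bilipschitzLinearMaps C :=
  closure_range_subset_bilipschitzLinearMaps ρ hC

theorem isCompact_envelopingMonoid (hap : ∀ v, IsCompact (closure (range fun g => ρ g v))) :
    IsCompact (envelopingMonoid ρ hC : Set (Function.End V)) :=
  isCompact_closure_range_of_forall (fun g => ⇑(ρ g)) hap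

instance : ContinuousMul (envelopingMonoid ρ hC) :=
  Submonoid.continuousMul_topologicalClosureOfContinuousOn _ _

def envelopingMonoid.toContinuousLinearMap : envelopingMonoid ρ hC →* (V →L[ℝ] V) where
  toFun f :=
    have hf := envelopingMonoid_subset_bilipschitzLinearMaps ρ hC f.2
    ⟨hf.1.mk' f.1, hf.2.1.continuous⟩
  map_one' := ContinuousLinearMap.ext fun _ => rfl
  map_mul' _ _ := ContinuousLinearMap.ext fun _ => rfl

end Enveloping

theorem stmt5_general {G V : Type} [Group G] [TopologicalSpace G]
    [NormedAddCommGroup V] [NormedSpace ℝ V]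
    (ρ : G →* (V →L[ℝ] V)) (hcont : ∀ v : V, Continuous fun g => ρ g v)
    (hub : ∃ C : ℝ, ∀ g : G, ‖ρ g‖ ≤ C)
    (hap : ∀ v : V, IsCompact (closure (Set.range fun g => ρ g v))) :
    Nonempty (CompactFactorization ρ) := by
  obtain ⟨C, hC⟩ : ∃ C : ℝ≥0, ∀ g, ‖ρ g‖₊ ≤ C := by
    obtain ⟨C, hC⟩ := hub
    exact ⟨C.toNNReal, fun g => (hC g).trans (Real.le_coe_toNNReal C)⟩
  let K := envelopingMonoid ρ hC
  have : CompactSpace K := isCompact_iff_compactSpace.1 (isCompact_envelopingMonoid ρ hC hap)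
  let : Group K := groupOfIsUnit <| isUnit_of_forall_isLeftRegular fun f =>
    Submonoid.isLeftRegular_of_coe <| Function.End.isLeftRegular_of_injective
      (envelopingMonoid_subset_bilipschitzLinearMaps ρ hC f.2).2.2.injective
  have hK : IsTopologicalGroup K := .of_compactSpace
  exact ⟨{ K := K
           tgrp := hK
           φ := (ContinuousLinearMap.toEnd.comp ρ).codRestrict K fun g => subset_closure ⟨g, rfl⟩
           σ := envelopingMonoid.toContinuousLinearMap ρ hC
           cont_φ := (continuous_pi hcont).subtype_mk _
           dense_φ := Subtype.dense_iff.2 (by rw [← range_comp]; exact subset_rfl)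
           cont_σ := fun v => (continuous_apply v).comp continuous_subtype_val
           factors := fun g => rfl }⟩

/-- an almost periodic uniformly bounded separately continuous representation
of a locally compact group on a Banach space factors through a compact group. -/
theorem stmt5 {G V : Type} [Group G] [TopologicalSpace G] [IsTopologicalGroup G]
    [LocallyCompactSpace G]
    [NormedAddCommGroup V] [NormedSpace ℝ V] [CompleteSpace V]
    (ρ : G →* (V →L[ℝ] V)) (hcont : ∀ v : V, Continuous fun g => ρ g v)
    (hub : ∃ C : ℝ, ∀ g : G, ‖ρ g‖ ≤ C)
    (hap : ∀ v : V, IsCompact (closure (Set.range fun g => ρ g v))) :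
    Nonempty (CompactFactorization ρ) :=
  stmt5_general ρ hcont hub hap
end

section
/- Let V be an almost periodic Banach G-module (uniformly bounded with all orbits relatively norm-compact). Then every finite-dimensional G-submodule C of V admits a closed G-invariant complement: V = C ⊕ W with W a closed G-invariant subspace. -/
/-!
The closure of `ρ(G)` in `V → V` for the topology of pointwise convergence is compact, because the
orbits are relatively compact, and its elements are linear and uniformly Lipschitz, because `ρ` is
uniformly bounded. The uniform Lipschitz bound makes composition jointly continuous, so this
closure is a compact monoid in which the units `ρ(G)` are dense; such a monoid is a compact group,
acting continuously on `V`, and `ρ` factors through it. Averaging any continuous projection onto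
`C` over its Haar measure gives an equivariant continuous projection onto `C`, whose kernel is the
required complement.
-/

open Filter Topology MeasureTheory Set Function

section CompactMonoid

variable {M : Type*} [Monoid M] [TopologicalSpace M] [ContinuousMul M] [CompactSpace M] [T2Space M]

theorem isUnit_of_dense_setOf_isUnit (h : Dense {a : M | IsUnit a}) (a : M) : IsUnit a := by
  let S := {p : M × M | p.1 * p.2 = 1 ∧ p.2 * p.1 = 1}
  have hclosed : IsClosed (Prod.fst '' S) :=
    ((isClosed_eq continuous_mul continuous_const).inter
      (isClosed_eq (continuous_mul.comp continuous_swap) continuous_const)).isCompact.image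
      continuous_fst |>.isClosed
  have hsub : {a : M | IsUnit a} ⊆ Prod.fst '' S :=
    fun a ha => let ⟨b, hb⟩ := isUnit_iff_exists.1 ha; ⟨(a, b), hb, rfl⟩
  obtain ⟨⟨_, b⟩, hb, rfl⟩ := closure_minimal hsub hclosed (h a)
  exact isUnit_iff_exists.2 ⟨b, hb⟩

end CompactMonoid

theorem continuous_inv_of_compactSpace {K : Type*} [Group K] [TopologicalSpace K] [ContinuousMul K]
    [CompactSpace K] [T2Space K] : Continuous fun k : K => k⁻¹ := by
  refine continuous_iff_isClosed.2 fun F hF => ?_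
  have hgraph :
      (fun k : K => k⁻¹) ⁻¹' F = Prod.fst '' {p : K × K | p.1 * p.2 = 1 ∧ p.2 ∈ F} := by
    ext k
    simp [mul_eq_one_iff_eq_inv']
  rw [hgraph]
  exact ((isClosed_eq continuous_mul continuous_const).inter
    (hF.preimage continuous_snd)).isCompact.image continuous_fst |>.isClosed

theorem continuous_parametric_integral_of_compactSpace {X K E : Type*} [TopologicalSpace X]
    [TopologicalSpace K] [CompactSpace K] [MeasurableSpace K] [OpensMeasurableSpace K]
    [NormedAddCommGroup E] [NormedSpace ℝ E] [SecondCountableTopologyEither K E]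
    (μ : Measure K) [IsFiniteMeasure μ] {f : X → K → E} (hf : Continuous (uncurry f)) :
    Continuous fun x => ∫ k, f x k ∂μ := by
  have hint : ∀ x, Integrable (f x) μ := fun x =>
    (hf.comp (Continuous.prodMk_right x)).integrable_of_hasCompactSupport
      (HasCompactSupport.of_compactSpace _)
  refine Metric.continuous_iff'.2 fun x₀ ε hε => ?_
  -- `+ 1` keeps the denominator positive when `μ = 0`
  have hδ : 0 < ε / (μ.real univ + 1) := by positivity
  obtain ⟨U, hU, hnear⟩ := isCompact_univ.mem_uniformity_of_prod hf.continuousOn (mem_univ x₀)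
    (Metric.dist_mem_uniformity hδ)
  filter_upwards [nhdsWithin_univ x₀ ▸ hU] with x hx
  calc dist (∫ k, f x k ∂μ) (∫ k, f x₀ k ∂μ) = ‖∫ k, (f x k - f x₀ k) ∂μ‖ := by
        rw [dist_eq_norm, integral_sub (hint x) (hint x₀)]
    _ ≤ ε / (μ.real univ + 1) * μ.real univ :=
        norm_integral_le_of_norm_le_const (ae_of_all _ fun k => by
          simpa only [dist_eq_norm] using (mem_ofPred.1 (hnear x hx k trivial)).le)
    _ < ε := by
        rw [div_mul_eq_mul_div, div_lt_iff₀ (by positivity)]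
        nlinarith

section Averaging

variable {K V : Type*} [Group K] [TopologicalSpace K] [IsTopologicalGroup K] [CompactSpace K]
  [NormedAddCommGroup V] [NormedSpace ℝ V] [DistribMulAction K V] [SMulCommClass K ℝ V]
  [ContinuousSMul K V] (C : Submodule ℝ V) [FiniteDimensional ℝ C]

theorem Submodule.exists_equivariant_projection [MeasurableSpace K] [BorelSpace K]
    (μ : Measure K) [IsProbabilityMeasure μ] [μ.IsMulLeftInvariant]
    (hC : ∀ k : K, ∀ v ∈ C, k • v ∈ C) :
    ∃ P : V →L[ℝ] C, (∀ c : C, P c = c) ∧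
      ∀ (k : K) (v : V), (P (k • v) : V) = k • (P v : V) := by
  obtain ⟨P₀, hP₀⟩ := Submodule.ClosedComplemented.of_finiteDimensional C
  let σ : K → C →L[ℝ] C := fun k =>
    LinearMap.toContinuousLinearMap ((DistribSMul.toLinearMap ℝ V k).restrict (hC k))
  let A : K → V →ₗ[ℝ] C := fun k =>
    (σ k : C →ₗ[ℝ] C) ∘ₗ (P₀ : V →ₗ[ℝ] C) ∘ₗ DistribSMul.toLinearMap ℝ V k⁻¹
  have hA : Continuous (uncurry fun v k => A k v) := by
    refine Continuous.subtype_mk ?_ _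
    show Continuous fun p : V × K => p.2 • (P₀ (p.2⁻¹ • p.1) : V)
    fun_prop
  have hint : ∀ v, Integrable (A · v) μ := fun v =>
    (hA.comp (Continuous.prodMk_right v)).integrable_of_hasCompactSupport
      (HasCompactSupport.of_compactSpace _)
  let P : V →ₗ[ℝ] C :=
    { toFun v := ∫ k, A k v ∂μ
      map_add' v w := by simp only [map_add]; exact integral_add (hint v) (hint w)
      map_smul' a v := by simp only [map_smul]; exact integral_smul a _ }
  refine ⟨⟨P, continuous_parametric_integral_of_compactSpace μ hA⟩, fun c => ?_, fun h v => ?_⟩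
  · have hfix : ∀ k, A k c = c := fun k => by
      ext
      show k • (P₀ (k⁻¹ • (c : V)) : V) = c
      rw [hP₀ ⟨k⁻¹ • (c : V), hC _ _ c.2⟩, smul_inv_smul]
    show ∫ k, A k c ∂μ = c
    simp [hfix]
  · have hshift : ∀ k, A (h * k) (h • v) = σ h (A k v) := fun k => by
      ext
      show (h * k) • (P₀ ((h * k)⁻¹ • h • v) : V) = h • k • (P₀ (k⁻¹ • v) : V)
      simp only [mul_inv_rev, mul_smul, inv_smul_smul]
    calc ((∫ k, A k (h • v) ∂μ : C) : V) = ((∫ k, A (h * k) (h • v) ∂μ : C) : V) := by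
          rw [integral_mul_left_eq_self (fun k => A k (h • v)) h]
      _ = σ h (∫ k, A k v ∂μ) := by
          simp_rw [hshift, (σ h).integral_comp_comm (hint v)]

theorem Submodule.exists_isClosed_isCompl_smul_mem (hC : ∀ k : K, ∀ v ∈ C, k • v ∈ C) :
    ∃ W : Submodule ℝ V, IsClosed (W : Set V) ∧ (∀ k : K, ∀ v ∈ W, k • v ∈ W) ∧ IsCompl C W := by
  borelize K
  have : IsProbabilityMeasure (Measure.haarMeasure (⊤ : TopologicalSpace.PositiveCompacts K)) :=
    ⟨Measure.haarMeasure_self⟩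
  obtain ⟨P, hPC, hP⟩ := C.exists_equivariant_projection (Measure.haarMeasure ⊤) hC
  refine ⟨LinearMap.ker P, P.isClosed_ker, fun k v hv => ?_, LinearMap.isCompl_of_proj hPC⟩
  rw [LinearMap.mem_ker, ContinuousLinearMap.coe_coe] at hv ⊢
  exact Subtype.ext ((hP k v).trans (by rw [hv, ZeroMemClass.coe_zero, smul_zero]))

end Averaging

section Envelope

variable {G V : Type*} [Group G] [NormedAddCommGroup V] [NormedSpace ℝ V]

def envelope (ρ : G →* (V →L[ℝ] V)) : Set (V → V) :=
  closure (range fun g => ⇑(ρ g))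

class IsAlmostPeriodic (ρ : G →* (V →L[ℝ] V)) : Prop where
  exists_norm_le : ∃ C, ∀ g, ‖ρ g‖ ≤ C
  isCompact_closure_orbit : ∀ v, IsCompact (closure (range fun g => ρ g v))

namespace envelope

variable (ρ : G →* (V →L[ℝ] V))

theorem coe_mem (g : G) : ⇑(ρ g) ∈ envelope ρ :=
  subset_closure (mem_range_self g)

theorem subset_of_isClosed {s : Set (V → V)} (hs : IsClosed s) (h : ∀ g, ⇑(ρ g) ∈ s) :
    envelope ρ ⊆ s :=
  closure_minimal (range_subset_iff.2 h) hs

variable {ρ}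

theorem comp_mem {S T : V → V} (hS : S ∈ envelope ρ) (hT : T ∈ envelope ρ) :
    S ∘ T ∈ envelope ρ := by
  have hleft : ∀ g, ⇑(ρ g) ∘ T ∈ envelope ρ := fun g =>
    map_mem_closure (Pi.continuous_postcomp (ρ g).continuous) hT
      (by rintro _ ⟨h, rfl⟩; exact ⟨g * h, by simp⟩)
  exact isClosed_closure.closure_subset
    (map_mem_closure (f := (· ∘ T)) (Pi.continuous_precomp T) hS
      (by rintro _ ⟨g, rfl⟩; exact hleft g))

theorem id_mem : id ∈ envelope ρ := by
  simpa using coe_mem ρ 1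

theorem isLinearMap {T : V → V} (hT : T ∈ envelope ρ) : IsLinearMap ℝ T := by
  obtain ⟨L, rfl⟩ := subset_of_isClosed ρ (LinearMap.isClosed_range_coe V V (RingHom.id ℝ))
    (fun g => ⟨(ρ g : V →ₗ[ℝ] V), rfl⟩) hT
  exact L.isLinear

theorem lipschitzWith {K : NNReal} (hK : ∀ g, ‖ρ g‖ ≤ K) {T : V → V} (hT : T ∈ envelope ρ) :
    LipschitzWith K T :=
  subset_of_isClosed ρ (isClosed_setOfPred_lipschitzWith K)
    (fun g => (ρ g).lipschitz.weaken (hK g)) hT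

theorem mapsTo {s : Set V} (hs : IsClosed s) (h : ∀ g, MapsTo (ρ g) s s) {T : V → V}
    (hT : T ∈ envelope ρ) : MapsTo T s s :=
  subset_of_isClosed ρ (hs.setOfPred_mapsTo fun v _ => continuous_apply v) h hT

theorem isCompact [IsAlmostPeriodic ρ] : IsCompact (envelope ρ) :=
  (isCompact_univ_pi IsAlmostPeriodic.isCompact_closure_orbit).of_isClosed_subset isClosed_closure
    (subset_of_isClosed ρ (isClosed_set_pi fun _ _ => isClosed_closure)
      fun g _ _ => subset_closure (mem_range_self g))

instance : Monoid (envelope ρ) where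
  mul S T := ⟨S ∘ T, comp_mem S.2 T.2⟩
  one := ⟨id, id_mem⟩
  mul_assoc _ _ _ := rfl
  one_mul _ := rfl
  mul_one _ := rfl

instance : DistribMulAction (envelope ρ) V where
  smul T v := T.1 v
  one_smul _ := rfl
  mul_smul _ _ _ := rfl
  smul_zero T := (isLinearMap T.2).map_zero
  smul_add T := (isLinearMap T.2).map_add

instance : SMulCommClass (envelope ρ) ℝ V where
  smul_comm T a v := (isLinearMap T.2).map_smul a v

variable (ρ) in
def toEnvelope : G →* envelope ρ where
  toFun g := ⟨ρ g, coe_mem ρ g⟩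
  map_one' := Subtype.ext (by simp only [map_one]; exact FunLike.coe_one_eq_id)
  map_mul' g h := Subtype.ext (by simp only [map_mul]; exact FunLike.coe_mul_eq_comp _ _)

theorem denseRange_toEnvelope : DenseRange (toEnvelope ρ) := by
  refine IsInducing.subtypeVal.dense_iff.2 fun T => ?_
  rw [← range_comp]
  exact T.2

variable [IsAlmostPeriodic ρ]

instance : CompactSpace (envelope ρ) := isCompact_iff_compactSpace.1 isCompact

instance : ContinuousSMul (envelope ρ) V := by
  obtain ⟨C, hC⟩ := IsAlmostPeriodic.exists_norm_le (ρ := ρ)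
  refine ⟨continuous_prod_of_continuous_lipschitzWith' _ C.toNNReal
    (fun T => lipschitzWith (fun g => (hC g).trans (Real.le_coe_toNNReal C)) T.2)
    fun v => (continuous_apply v).comp continuous_subtype_val⟩

instance : ContinuousMul (envelope ρ) :=
  ⟨(continuous_pi fun _ => continuous_smul.comp (continuous_fst.prodMk
    (continuous_smul.comp (continuous_snd.prodMk continuous_const)))).subtype_mk _⟩

noncomputable instance : Group (envelope ρ) :=
  groupOfIsUnit (isUnit_of_dense_setOf_isUnit (denseRange_toEnvelope.mono
    (range_subset_iff.2 fun g => (Group.isUnit g).map (toEnvelope ρ))))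

instance : IsTopologicalGroup (envelope ρ) where
  continuous_inv := continuous_inv_of_compactSpace

end envelope

end Envelope

theorem stmt7_general {G V : Type*} [Group G]
    [NormedAddCommGroup V] [NormedSpace ℝ V]
    (ρ : G →* (V →L[ℝ] V))
    (hub : ∃ Cb : ℝ, ∀ g : G, ‖ρ g‖ ≤ Cb)
    (hap : ∀ v : V, IsCompact (closure (Set.range fun g => ρ g v)))
    (C : Submodule ℝ V) [FiniteDimensional ℝ C]
    (hCinv : ∀ g : G, ∀ v ∈ C, ρ g v ∈ C) :
    ∃ W : Submodule ℝ V, IsClosed (W : Set V) ∧ (∀ g : G, ∀ v ∈ W, ρ g v ∈ W) ∧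
      IsCompl C W := by
  have : IsAlmostPeriodic ρ := ⟨hub, hap⟩
  obtain ⟨W, hW, hWinv, hCW⟩ := C.exists_isClosed_isCompl_smul_mem (K := envelope ρ)
    fun T _ hv => envelope.mapsTo C.closed_of_finiteDimensional (fun g _ => hCinv g _) T.2 hv
  exact ⟨W, hW, fun g => hWinv (envelope.toEnvelope ρ g), hCW⟩

/-- in an almost periodic Banach `G`-module, every finite-dimensional
invariant subspace admits a closed invariant complement. -/
theorem stmt7 {G V : Type*} [Group G] [TopologicalSpace G]
    [NormedAddCommGroup V] [NormedSpace ℝ V] [CompleteSpace V]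
    (ρ : G →* (V →L[ℝ] V)) (hcont : ∀ v : V, Continuous fun g => ρ g v)
    (hub : ∃ Cb : ℝ, ∀ g : G, ‖ρ g‖ ≤ Cb)
    (hap : ∀ v : V, IsCompact (closure (Set.range fun g => ρ g v)))
    (C : Submodule ℝ V) [FiniteDimensional ℝ C]
    (hCinv : ∀ g : G, ∀ v ∈ C, ρ g v ∈ C) :
    ∃ W : Submodule ℝ V, IsClosed (W : Set V) ∧ (∀ g : G, ∀ v ∈ W, ρ g v ∈ W) ∧
      IsCompl C W :=
  stmt7_general ρ hub hap C hCinv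
end

section
/- Let V be an almost periodic Banach G-module. Then every closed G-submodule W of finite codimension admits a G-invariant complement: there is a finite-dimensional G-invariant subspace F' with V = F' ⊕ W. -/
/-!
Fix a continuous projection `P₀` with kernel `W`, through a section of `V → V ⧸ W`. Its conjugates
`ρ g * P₀ * (ρ g)⁻¹` factor through the finite-dimensional quotient, so almost periodicity makes
them a relatively compact family. The conjugation action is equicontinuous, and an equicontinuous
action on a compact space factors through a compact group, namely the group of units of the closure
of its image in `C(Y, Y)`; the Haar measure of that group gives an invariant probability measure on
the orbit closure of `P₀`. Averaging against it produces a projection with kernel `W` commuting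
with every `ρ g`, and its range is the required complement.
-/

open Set MeasureTheory

theorem ContinuousMap.isCompact_closure_range_of_equicontinuous {ι X α : Type*}
    [TopologicalSpace X] [CompactlyCoherentSpace X] [UniformSpace α] [T2Space α]
    (F : ι → C(X, α)) (hF : Equicontinuous fun i => ⇑(F i))
    (hpt : ∀ x, IsCompact (closure (range fun i => F i x))) :
    IsCompact (closure (range F)) := by
  refine ArzelaAscoli.isCompact_closure_of_isClosedEmbedding (𝔖 := {K : Set X | IsCompact K})
    (F := fun f : C(X, α) => ⇑f) (fun _ hK => hK)
    ⟨(ContinuousMap.isUniformEmbedding_toUniformOnFunIsCompact (α := X) (β := α)).isEmbedding, ?_⟩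
    (fun K _ => ?_) fun K _ x _ => ⟨_, hpt x, ?_⟩
  · exact ContinuousMap.range_toUniformOnFunIsCompact (α := X) (β := α) ▸
      UniformOnFun.isClosed_setOfPred_continuous CompactlyCoherentSpace.isCoherentWith
  · refine Equicontinuous.equicontinuousOn ?_ K
    rw [equicontinuous_iff_range, range_comp, Subtype.range_coe, ← range_comp]
    exact equicontinuous_iff_range.mp hF
  · rintro - ⟨i, rfl⟩
    exact subset_closure ⟨i, rfl⟩

theorem Equicontinuous.isCompact_closure_iUnion_image {ι X α : Type*} [TopologicalSpace X]
    [UniformSpace α] [T2Space α] {F : ι → X → α} (hF : Equicontinuous F)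
    (hpt : ∀ x, IsCompact (closure (range fun i => F i x))) {K : Set X} (hK : IsCompact K) :
    IsCompact (closure (⋃ i, F i '' K)) := by
  have : CompactSpace K := isCompact_iff_compactSpace.mp hK
  let R : ι → C(K, α) := fun i => ⟨K.domRestrict (F i), (hF.continuous i).comp
    continuous_subtype_val⟩
  have hR : IsCompact (closure (range R)) :=
    ContinuousMap.isCompact_closure_range_of_equicontinuous R
      ((equicontinuous_restrict_iff F).mpr (hF.equicontinuousOn K)) fun k => hpt k
  refine ((hR.prod isCompact_univ).image continuous_eval).closure_of_subset ?_
  rintro - ⟨-, ⟨i, rfl⟩, ⟨k, hk, rfl⟩⟩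
  exact ⟨(R i, ⟨k, hk⟩), ⟨subset_closure ⟨i, rfl⟩, mem_univ _⟩, rfl⟩

theorem ContinuousLinearMap.isCompact_closure_of_isCompact_closure_image_apply {𝕜 E F : Type*}
    [NontriviallyNormedField 𝕜] [CompleteSpace 𝕜]
    [NormedAddCommGroup E] [NormedSpace 𝕜 E] [FiniteDimensional 𝕜 E]
    [NormedAddCommGroup F] [NormedSpace 𝕜 F] {S : Set (E →L[𝕜] F)}
    (hS : ∀ e, IsCompact (closure ((fun T : E →L[𝕜] F => T e) '' S))) : IsCompact (closure S) := by
  let b := Module.finBasis 𝕜 E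
  let eval : (E →L[𝕜] F) ≃L[𝕜] (Fin (Module.finrank 𝕜 E) → F) :=
    (b.equivFunL.arrowCongr (.refl 𝕜 F)).trans (.piRing _)
  have heval : ∀ T i, eval T i = T (b i) := fun T i => by
    change T (b.equivFun.symm (Pi.single i 1)) = T (b i)
    simp
  refine ((isCompact_univ_pi fun i => hS (b i)).image eval.symm.continuous).closure_of_subset ?_
  intro T hT
  refine ⟨eval T, fun i _ => ?_, eval.symm_apply_apply T⟩
  rw [heval]
  exact subset_closure ⟨T, hT, rfl⟩

/-- A type synonym for `C(Y, Y)`, carrying the monoid structure given by composition (which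
would clash with the pointwise one on `C(Y, Y)`). -/
def ContinuousEnd (Y : Type*) [TopologicalSpace Y] : Type _ := C(Y, Y)

namespace ContinuousEnd

variable {Y : Type*} [TopologicalSpace Y]

instance : TopologicalSpace (ContinuousEnd Y) := inferInstanceAs (TopologicalSpace C(Y, Y))

instance : FunLike (ContinuousEnd Y) Y Y := inferInstanceAs (FunLike C(Y, Y) Y Y)

instance : ContinuousEvalConst (ContinuousEnd Y) Y Y :=
  inferInstanceAs (ContinuousEvalConst C(Y, Y) Y Y)

instance : Monoid (ContinuousEnd Y) where
  mul f g := ContinuousMap.comp (show C(Y, Y) from f) g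
  one := ContinuousMap.id Y
  mul_assoc _ _ _ := rfl
  one_mul _ := rfl
  mul_one _ := rfl

instance [LocallyCompactSpace Y] : ContinuousMul (ContinuousEnd Y) :=
  ⟨by exact ContinuousMap.continuous_comp'.comp continuous_swap⟩

instance [T2Space Y] : T2Space (ContinuousEnd Y) := inferInstanceAs (T2Space C(Y, Y))

end ContinuousEnd

theorem exists_isProbabilityMeasure_map_smul_eq {G Y : Type*} [Group G] [MulAction G Y]
    [UniformSpace Y] [T2Space Y] [CompactSpace Y] [Nonempty Y] [MeasurableSpace Y] [BorelSpace Y]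
    (h : Equicontinuous fun g : G => (g • · : Y → Y)) :
    ∃ μ : Measure Y, IsProbabilityMeasure μ ∧ ∀ g : G, μ.map (g • ·) = μ := by
  let φ : G →* ContinuousEnd Y :=
    { toFun g := (⟨(g • ·), h.continuous g⟩ : C(Y, Y))
      map_one' := ContinuousMap.ext (one_smul G)
      map_mul' g g' := ContinuousMap.ext (mul_smul g g') }
  let M := (MonoidHom.mrange φ).topologicalClosure
  have : CompactSpace M := isCompact_iff_compactSpace.mp <| by
    rw [Submonoid.coe_topologicalClosure, MonoidHom.coe_mrange]
    exact ContinuousMap.isCompact_closure_range_of_equicontinuous (fun g => (φ g : C(Y, Y))) h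
      fun _ => isClosed_closure.isCompact
  let ψ : G →* Mˣ := ((Submonoid.inclusion (MonoidHom.mrange φ).le_topologicalClosure).comp
    φ.mrangeRestrict).toHomUnits
  borelize Mˣ
  let ν := Measure.haarMeasure (⊤ : TopologicalSpace.PositiveCompacts Mˣ)
  have : IsProbabilityMeasure ν := ⟨Measure.haarMeasure_self⟩
  obtain ⟨y₀⟩ := ‹Nonempty Y›
  let ev : Mˣ → Y := fun u => (u : M).1 y₀
  have hev : Continuous ev :=
    (continuous_eval_const y₀).comp (continuous_subtype_val.comp Units.continuous_val)
  refine ⟨ν.map ev, Measure.isProbabilityMeasure_map hev.aemeasurable, fun g => ?_⟩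
  calc (ν.map ev).map (g • ·)
      = ν.map ((g • ·) ∘ ev) := Measure.map_map (h.continuous g).measurable hev.measurable
    _ = ν.map (ev ∘ (ψ g * ·)) := rfl
    _ = (ν.map (ψ g * ·)).map ev := (Measure.map_map hev.measurable (measurable_const_mul _)).symm
    _ = ν.map ev := by rw [map_mul_left_eq_self]

theorem exists_fixed_mem_of_isCompact_closure_orbit {G X : Type*} [Group G]
    [NormedAddCommGroup X] [NormedSpace ℝ X] [CompleteSpace X]
    (σ : G →* (X →L[ℝ] X)) {C : ℝ} (hσ : ∀ g, ‖σ g‖ ≤ C) {x : X}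
    (hx : IsCompact (closure (range fun g => σ g x))) {s : Set X} (hs : Convex ℝ s)
    (hsc : IsClosed s) (hxs : ∀ g, σ g x ∈ s) : ∃ y ∈ s, ∀ g, σ g y = y := by
  -- `g • y = σ g y`, so that the orbit closure can be made a `SubMulAction`
  let _ : MulAction G X := MulAction.compHom X σ
  let Y : SubMulAction G X :=
    { carrier := closure (range fun g => σ g x)
      smul_mem' g y hy := map_mem_closure (σ g).continuous hy <| by
        rintro - ⟨g', rfl⟩
        exact ⟨g * g', by simp only [map_mul]; rfl⟩ }
  have : CompactSpace Y := isCompact_iff_compactSpace.mp hx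
  have : Nonempty Y := ⟨⟨x, subset_closure ⟨1, by simp⟩⟩⟩
  borelize ↥Y
  have hY : Equicontinuous fun g : G => (g • · : Y → Y) :=
    (LipschitzWith.uniformEquicontinuous _ _ fun g => LipschitzWith.of_dist_le' fun y y' => by
      rw [Subtype.dist_eq, Subtype.dist_eq, dist_eq_norm, dist_eq_norm]
      exact map_sub (σ g) (y : X) y' ▸ (σ g).le_of_opNorm_le (hσ g) _).equicontinuous
  obtain ⟨μ, hμ, hμσ⟩ := exists_isProbabilityMeasure_map_smul_eq hY
  have hint : Integrable (fun y : Y => (y : X)) μ :=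
    continuous_subtype_val.integrable_of_hasCompactSupport (.of_compactSpace _)
  refine ⟨∫ y, (y : X) ∂μ, hs.integral_mem hsc (.of_forall fun y => ?_) hint, fun g => ?_⟩
  · exact closure_minimal (range_subset_iff.mpr hxs) hsc y.2
  · calc σ g (∫ y, (y : X) ∂μ) = ∫ y, ((g • y : Y) : X) ∂μ :=
          ((σ g).integral_comp_comm hint).symm
      _ = ∫ y : Y, (y : X) ∂(μ.map (g • ·)) :=
          (integral_map (hY.continuous g).aemeasurable
            continuous_subtype_val.aestronglyMeasurable).symm
      _ = ∫ y, (y : X) ∂μ := by rw [hμσ]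

section conjRep

variable {G : Type*} (𝕜 : Type*) {A : Type*} [Group G] [NontriviallyNormedField 𝕜] [NormedRing A]
  [NormedAlgebra 𝕜 A] (ρ : G →* A)

noncomputable def conjRep : G →* (A →L[𝕜] A) where
  toFun g := ContinuousLinearMap.mulLeftRight 𝕜 A (ρ g) (ρ g⁻¹)
  map_one' := by ext; simp
  map_mul' g h := by ext; simp [mul_assoc]

theorem conjRep_apply (g : G) (a : A) : conjRep 𝕜 ρ g a = ρ g * a * ρ g⁻¹ := rfl

theorem conjRep_apply_eq_self_iff (g : G) (a : A) : conjRep 𝕜 ρ g a = a ↔ ρ g * a = a * ρ g :=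
  Units.mul_inv_eq_iff_eq_mul (ρ.toHomUnits g)

theorem norm_conjRep_le (g : G) : ‖conjRep 𝕜 ρ g‖ ≤ ‖ρ g‖ * ‖ρ g⁻¹‖ :=
  ContinuousLinearMap.opNorm_mulLeftRight_apply_apply_le _ _ _ _

end conjRep

theorem isCompact_closure_range_conjRep_apply {G V E : Type*} [Group G]
    [NormedAddCommGroup V] [NormedSpace ℝ V] [NormedAddCommGroup E] [NormedSpace ℝ E]
    [FiniteDimensional ℝ E] (ρ : G →* (V →L[ℝ] V)) {C : ℝ} (hC : ∀ g, ‖ρ g‖ ≤ C)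
    (hap : ∀ v, IsCompact (closure (range fun g => ρ g v)))
    (π : V →L[ℝ] E) (s : E →L[ℝ] V) (hπ : ∀ g v, π v = 0 → π (ρ g v) = 0)
    (hπs : ∀ e, π (s e) = e) :
    IsCompact (closure (range fun g => conjRep ℝ ρ g (s ∘L π))) := by
  set Q := fun g => conjRep ℝ ρ g (s ∘L π)
  -- each `Q g` vanishes on `ker π`, hence factors through `π`
  have hQ : ∀ g, Q g = (Q g ∘L s) ∘L π := fun g => ContinuousLinearMap.ext fun v => by
    have : π (ρ g⁻¹ (v - s (π v))) = 0 := hπ _ _ (by simp [hπs])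
    simp only [Q, conjRep_apply, mul_apply_eq_comp, ContinuousLinearMap.comp_apply]
    rw [map_sub, map_sub, sub_eq_zero] at this
    rw [this]
  have hρ : Equicontinuous fun g => ⇑(ρ g) :=
    ((NormedSpace.equicontinuous_TFAE fun g => ρ g).out 5 1).mp (⟨C, hC⟩ : ∃ C, ∀ g, ‖ρ g‖ ≤ C)
  have hQs : IsCompact (closure (range fun g => Q g ∘L s)) := by
    refine ContinuousLinearMap.isCompact_closure_of_isCompact_closure_image_apply fun e => ?_
    refine (hρ.isCompact_closure_iUnion_image hap ((isCompact_closedBall (0 : E)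
      (‖π‖ * C * ‖s e‖)).image s.continuous)).closure_of_subset (Subset.trans ?_ subset_closure)
    rintro - ⟨-, ⟨g, rfl⟩, rfl⟩
    refine mem_iUnion.mpr ⟨g, s (π (ρ g⁻¹ (s e))), mem_image_of_mem s ?_, rfl⟩
    rw [mem_closedBall_zero_iff]
    calc ‖π (ρ g⁻¹ (s e))‖ ≤ ‖π‖ * (‖ρ g⁻¹‖ * ‖s e‖) :=
          π.le_opNorm_of_le ((ρ g⁻¹).le_opNorm _)
      _ ≤ ‖π‖ * C * ‖s e‖ := by
          rw [mul_assoc]; gcongr; exact hC _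
  refine (hQs.image (ContinuousLinearMap.precomp V π).continuous).closure_of_subset ?_
  rintro - ⟨g, rfl⟩
  exact ⟨Q g ∘L s, subset_closure ⟨g, rfl⟩, (hQ g).symm⟩

section projectionsAlong

variable {V : Type*} [NormedAddCommGroup V] [NormedSpace ℝ V]

/-- Its members are exactly the projections with kernel `W`. -/
def projectionsAlong (W : Submodule ℝ V) : Set (V →L[ℝ] V) :=
  {T | (∀ w ∈ W, T w = 0) ∧ ∀ v, v - T v ∈ W}

variable {W : Submodule ℝ V}

theorem convex_projectionsAlong : Convex ℝ (projectionsAlong W) := by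
  rintro T ⟨hTW, hT⟩ T' ⟨hT'W, hT'⟩ a b - - hab
  refine ⟨fun w hw => by simp [hTW w hw, hT'W w hw], fun v => ?_⟩
  have : v - (a • T + b • T') v = a • (v - T v) + b • (v - T' v) := by
    rw [add_apply, smul_apply, smul_apply]
    linear_combination (norm := module) hab.symm • v
  exact this ▸ W.add_mem (W.smul_mem a (hT v)) (W.smul_mem b (hT' v))

theorem isClosed_projectionsAlong (hW : IsClosed (W : Set V)) : IsClosed (projectionsAlong W) := by
  simp only [projectionsAlong, ofPred_and, ofPred_forall]
  exact (isClosed_iInter fun w => isClosed_iInter fun _ =>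
    isClosed_eq (continuous_eval_const w) continuous_const).inter
    (isClosed_iInter fun v => hW.preimage (continuous_const.sub (continuous_eval_const v)))

theorem isCompl_range_of_mem_projectionsAlong {P : V →L[ℝ] V} (hP : P ∈ projectionsAlong W) :
    IsCompl (LinearMap.range (P : V →ₗ[ℝ] V)) W := by
  obtain ⟨hPW, hP⟩ := hP
  have hker : LinearMap.ker (P : V →ₗ[ℝ] V) = W := le_antisymm
    (fun v hv => by simpa [show P v = 0 from hv] using hP v) fun w hw => hPW w hw
  have hidem : IsIdempotentElem (P : V →ₗ[ℝ] V) := LinearMap.ext fun v => by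
    have := hPW _ (hP v)
    rw [map_sub, sub_eq_zero] at this
    exact this.symm
  exact hker ▸ LinearMap.IsIdempotentElem.isCompl hidem

theorem conjRep_mem_projectionsAlong {G : Type*} [Group G] (ρ : G →* (V →L[ℝ] V))
    (hW : ∀ g, ∀ v ∈ W, ρ g v ∈ W) {T : V →L[ℝ] V} (hT : T ∈ projectionsAlong W) (g : G) :
    conjRep ℝ ρ g T ∈ projectionsAlong W := by
  have hρρ : ∀ g g' v, ρ g (ρ g' v) = ρ (g * g') v := fun g g' v => by simp
  refine ⟨fun w hw => by simp [conjRep_apply, hT.1 _ (hW _ w hw)], fun v => ?_⟩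
  simpa [conjRep_apply, hρρ] using hW g _ (hT.2 (ρ g⁻¹ v))

theorem comp_mkQL_mem_projectionsAlong (s : V ⧸ W →L[ℝ] V)
    (hs : ∀ e, W.mkQL (s e) = e) : s ∘L W.mkQL ∈ projectionsAlong W := by
  refine ⟨fun w hw => by simp [(Submodule.Quotient.mk_eq_zero W).mpr hw], fun v => ?_⟩
  rw [← Submodule.Quotient.mk_eq_zero, Submodule.Quotient.mk_sub]
  exact sub_eq_zero.mpr (hs _).symm

end projectionsAlong

theorem stmt8_general {G V : Type*} [Group G]
    [NormedAddCommGroup V] [NormedSpace ℝ V] [CompleteSpace V]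
    (ρ : G →* (V →L[ℝ] V))
    (hub : ∃ Cb : ℝ, ∀ g : G, ‖ρ g‖ ≤ Cb)
    (hap : ∀ v : V, IsCompact (closure (Set.range fun g => ρ g v)))
    (W : Submodule ℝ V) (hWclosed : IsClosed (W : Set V))
    [FiniteDimensional ℝ (V ⧸ W)]
    (hWinv : ∀ g : G, ∀ v ∈ W, ρ g v ∈ W) :
    ∃ F : Submodule ℝ V, FiniteDimensional ℝ F ∧ (∀ g : G, ∀ v ∈ F, ρ g v ∈ F) ∧
      IsCompl F W := by
  obtain ⟨C, hC⟩ := hub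
  have : IsClosed (W : Set V) := hWclosed
  obtain ⟨s, hs⟩ := W.mkQ.exists_rightInverse_of_surjective W.range_mkQ
  let s' : V ⧸ W →L[ℝ] V := LinearMap.toContinuousLinearMap s
  have hs' : ∀ e, W.mkQL (s' e) = e := LinearMap.congr_fun hs
  have hP₀ := comp_mkQL_mem_projectionsAlong s' hs'
  obtain ⟨P, hP, hPρ⟩ := exists_fixed_mem_of_isCompact_closure_orbit (conjRep ℝ ρ)
    (fun g => (norm_conjRep_le ℝ ρ g).trans
      (mul_le_mul (hC g) (hC _) (norm_nonneg _) ((norm_nonneg _).trans (hC g))))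
    (isCompact_closure_range_conjRep_apply ρ hC hap W.mkQL s'
      (fun g v hv => by simpa using hWinv g v (by simpa using hv)) hs')
    convex_projectionsAlong (isClosed_projectionsAlong hWclosed)
    (conjRep_mem_projectionsAlong ρ hWinv hP₀)
  have hcompl := isCompl_range_of_mem_projectionsAlong hP
  refine ⟨_, (W.quotientEquivOfIsCompl _ hcompl.symm).finiteDimensional, ?_, hcompl⟩
  rintro g - ⟨v, rfl⟩
  exact ⟨ρ g v, congrArg (· v) ((conjRep_apply_eq_self_iff ℝ ρ g P).mp (hPρ g)).symm⟩

/-- in an almost periodic Banach `G`-module, every closed invariant subspace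
of finite codimension admits a finite-dimensional invariant complement. -/
theorem stmt8 {G V : Type*} [Group G] [TopologicalSpace G]
    [NormedAddCommGroup V] [NormedSpace ℝ V] [CompleteSpace V]
    (ρ : G →* (V →L[ℝ] V)) (hcont : ∀ v : V, Continuous fun g => ρ g v)
    (hub : ∃ Cb : ℝ, ∀ g : G, ‖ρ g‖ ≤ Cb)
    (hap : ∀ v : V, IsCompact (closure (Set.range fun g => ρ g v)))
    (W : Submodule ℝ V) (hWclosed : IsClosed (W : Set V))
    [FiniteDimensional ℝ (V ⧸ W)]
    (hWinv : ∀ g : G, ∀ v ∈ W, ρ g v ∈ W) :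
    ∃ F : Submodule ℝ V, FiniteDimensional ℝ F ∧ (∀ g : G, ∀ v ∈ F, ρ g v ∈ F) ∧
      IsCompl F W :=
  stmt8_general ρ hub hap W hWclosed hWinv
end

section
/- Let G be a locally compact group, (V, π) a Banach G-module, and b : G → V a measurable, locally integrable function satisfying the cocycle identity b(gh) = π(g)b(h) + b(g). Then b is continuous. -/
/-!
Smooth `b` against a continuous compactly supported bump `φ ≥ 0` with `φ 1 = 1`. Left invariance
of Haar measure and the cocycle identity give
`∫ φ (g⁻¹ k) • b k dk = ρ g (∫ φ • b) + (∫ φ) • b g`.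
The left side is continuous in `g`: near `g₀` the translates `φ (g⁻¹ ·)` are supported in one
compact set `K` and converge uniformly on it, while `b` is integrable on `K`. Since `∫ φ > 0`,
solving for `b g` exhibits `b` as a continuous function.
-/

open MeasureTheory Pointwise

/-- Unlike the unprimed Mathlib lemma, this does not assume `T2Space X`. -/
theorem MeasureTheory.LocallyIntegrable.integrable_smul_left_of_hasCompactSupport' {X E : Type*}
    [TopologicalSpace X] [MeasurableSpace X] [OpensMeasurableSpace X] [NormedAddCommGroup E]
    [NormedSpace ℝ E] {μ : Measure X} {f : X → E} (hf : LocallyIntegrable f μ) {g : X → ℝ}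
    (hg : Continuous g) (h'g : HasCompactSupport g) : Integrable (fun x ↦ g x • f x) μ := by
  have hfg : (tsupport g).indicator (fun x ↦ g x • f x) = fun x ↦ g x • f x :=
    Set.indicator_eq_self.2 fun x hx ↦ subset_tsupport g (left_ne_zero_of_smul hx)
  rw [← hfg, Set.indicator_smul]
  refine Integrable.smul_of_top_right ?_ (hg.memLp_top_of_hasCompactSupport h'g μ)
  rw [integrable_indicator_iff (isClosed_tsupport g).measurableSet]
  exact hf.integrableOn_isCompact h'g

theorem integral_comp_inv_mul_smul_of_cocycle {G V : Type*} [Group G] [MeasurableSpace G]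
    [MeasurableMul G] [NormedAddCommGroup V] [NormedSpace ℝ V] [CompleteSpace V]
    (μ : Measure G) [μ.IsMulLeftInvariant] (ρ : G → V →L[ℝ] V) (b : G → V)
    (hcoc : ∀ g h : G, b (g * h) = ρ g (b h) + b g) {φ : G → ℝ} (hφ : Integrable φ μ)
    (hφb : Integrable (fun k ↦ φ k • b k) μ) (g : G) :
    ∫ k, φ (g⁻¹ * k) • b k ∂μ = ρ g (∫ k, φ k • b k ∂μ) + (∫ k, φ k ∂μ) • b g := by
  have hρφb : Integrable (fun k ↦ ρ g (φ k • b k)) μ := (ρ g).integrable_comp hφb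
  calc ∫ k, φ (g⁻¹ * k) • b k ∂μ
      = ∫ k, φ (g⁻¹ * (g * k)) • b (g * k) ∂μ :=
        (integral_mul_left_eq_self (fun k ↦ φ (g⁻¹ * k) • b k) g).symm
    _ = ∫ k, (ρ g (φ k • b k) + φ k • b g) ∂μ := by
        simp only [inv_mul_cancel_left, hcoc, smul_add, map_smul]
    _ = ρ g (∫ k, φ k • b k ∂μ) + (∫ k, φ k ∂μ) • b g := by
        rw [integral_add hρφb (hφ.smul_const _), (ρ g).integral_comp_comm hφb,
          integral_smul_const]

theorem MeasureTheory.IntegrableOn.continuous_setIntegral_smul {X Y E : Type*}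
    [TopologicalSpace X] [TopologicalSpace Y] [MeasurableSpace Y] [OpensMeasurableSpace Y]
    [NormedAddCommGroup E] [NormedSpace ℝ E] {μ : Measure Y} {K : Set Y} {b : Y → E}
    (hb : IntegrableOn b K μ) (hK : IsCompact K) (hKm : MeasurableSet K) {f : X → Y → ℝ}
    (hf : ContinuousOn (Function.uncurry f) (Set.univ ×ˢ K)) :
    Continuous fun x ↦ ∫ y in K, f x y • b y ∂μ := by
  refine continuous_iff_continuousAt.2 fun x₀ ↦ Metric.continuousAt_iff'.2 fun ε hε ↦ ?_
  set M := ∫ y in K, ‖b y‖ ∂μ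
  have hM : 0 ≤ M := integral_nonneg fun _ ↦ norm_nonneg _
  set δ := ε / (M + 1)
  have hδ : 0 < δ := by positivity
  have hfb : ∀ x, IntegrableOn (fun y ↦ f x y • b y) K μ := fun x ↦
    hb.continuousOn_smul_of_subset (f := f x)
      (hf.comp (continuous_const.prodMk continuous_id).continuousOn fun _ hy ↦ ⟨trivial, hy⟩)
      hK hKm le_rfl
  obtain ⟨v, hv, hvδ⟩ := hK.mem_uniformity_of_prod hf (Set.mem_univ x₀)
    (Metric.dist_mem_uniformity hδ)
  rw [nhdsWithin_univ] at hv
  filter_upwards [hv] with x hx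
  have hclose : ∀ y ∈ K, ‖(f x y - f x₀ y) • b y‖ ≤ δ * ‖b y‖ := fun y hy ↦ by
    rw [norm_smul]
    exact mul_le_mul_of_nonneg_right (le_of_lt (hvδ x hx y hy)) (norm_nonneg _)
  calc dist (∫ y in K, f x y • b y ∂μ) (∫ y in K, f x₀ y • b y ∂μ)
      = ‖∫ y in K, (f x y - f x₀ y) • b y ∂μ‖ := by
        simp only [dist_eq_norm, sub_smul, integral_sub (hfb x) (hfb x₀)]
    _ ≤ ∫ y in K, δ * ‖b y‖ ∂μ :=
        norm_integral_le_of_norm_le (hb.norm.const_mul δ)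
          ((ae_restrict_iff' hKm).2 (.of_forall hclose))
    _ = δ * M := integral_const_mul δ _
    _ < ε := by
        rw [div_mul_eq_mul_div, div_lt_iff₀ (by positivity)]
        nlinarith

theorem MeasureTheory.LocallyIntegrable.continuous_integral_comp_inv_mul_smul {G E : Type*}
    [Group G] [TopologicalSpace G] [IsTopologicalGroup G] [LocallyCompactSpace G]
    [MeasurableSpace G] [BorelSpace G] [NormedAddCommGroup E] [NormedSpace ℝ E] {μ : Measure G}
    {b : G → E} (hb : LocallyIntegrable b μ) {φ : G → ℝ} (hφ : Continuous φ)
    (hφc : HasCompactSupport φ) :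
    Continuous fun g ↦ ∫ k, φ (g⁻¹ * k) • b k ∂μ := by
  refine continuous_iff_continuousAt.2 fun g₀ ↦ ?_
  obtain ⟨N, hNc, hN⟩ := exists_compact_mem_nhds g₀
  set K := closure (N * tsupport φ)
  have hK : IsCompact K := (hNc.mul hφc).closure
  have hsupp : ∀ g ∈ N, ∀ k ∉ K, φ (g⁻¹ * k) = 0 := fun g hg k hk ↦ by
    by_contra hne
    exact hk (subset_closure ⟨g, hg, g⁻¹ * k, subset_tsupport φ hne, mul_inv_cancel_left g k⟩)
  have hsmooth := (hb.integrableOn_isCompact hK).continuous_setIntegral_smul hK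
    isClosed_closure.measurableSet (f := fun g k ↦ φ (g⁻¹ * k)) (by fun_prop)
  refine hsmooth.continuousAt.congr ?_
  filter_upwards [hN] with g hg
  exact setIntegral_eq_integral_of_forall_compl_eq_zero fun k hk ↦ by simp [hsupp g hg k hk]

/-- a measurable, locally integrable 1-cocycle on a locally compact group with
values in a continuous Banach module is continuous. -/
theorem stmt9 {G V : Type*} [Group G] [TopologicalSpace G] [IsTopologicalGroup G]
    [LocallyCompactSpace G] [MeasurableSpace G] [BorelSpace G]
    [NormedAddCommGroup V] [NormedSpace ℝ V] [CompleteSpace V]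
    (μ : Measure G) [μ.IsHaarMeasure]
    (ρ : G →* (V →L[ℝ] V)) (hcont : ∀ v : V, Continuous fun g => ρ g v)
    (b : G → V) (hb : LocallyIntegrable b μ)
    (hcoc : ∀ g h : G, b (g * h) = ρ g (b h) + b g) :
    Continuous b := by
  obtain ⟨φ, hφ1, -, hφc, hφ01⟩ := exists_continuous_one_zero_of_isCompact
    (isCompact_singleton (x := (1 : G))) isClosed_empty (Set.disjoint_empty _)
  have hmass : 0 < ∫ k, φ k ∂μ :=
    φ.continuous.integral_pos_of_hasCompactSupport_nonneg_nonzero (x := 1) hφc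
      (fun k ↦ (hφ01 k).1) (by simp [hφ1 rfl])
  have hφb := hb.integrable_smul_left_of_hasCompactSupport' φ.continuous hφc
  have hsmooth := hb.continuous_integral_comp_inv_mul_smul (μ := μ) φ.continuous hφc
  have hb_eq : b = fun g ↦ (∫ k, φ k ∂μ)⁻¹ •
      ((∫ k, φ (g⁻¹ * k) • b k ∂μ) - ρ g (∫ k, φ k • b k ∂μ)) := funext fun g ↦ by
    rw [integral_comp_inv_mul_smul_of_cocycle μ (ρ ·) b hcoc
      (φ.continuous.integrable_of_hasCompactSupport hφc) hφb g, add_sub_cancel_left,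
      inv_smul_smul₀ hmass.ne']
  rw [hb_eq]
  exact (hsmooth.sub (hcont _)).const_smul _
end

section
/- Let G be a compactly generated locally compact group with compact generating set S, (V, π) a uniformly bounded Banach G-module, and b ∈ Z¹(G, π) a continuous 1-cocycle. If b is an almost coboundary (i.e. in the closure of coboundaries for uniform convergence on compacts), then b is sublinear: ‖b(g)‖ = o(|g|_S) as |g|_S → ∞. -/
/-!
Perturbing `b` by the coboundary of `v` gives the cocycle `b' g = ρ g v + b g - v`, and
`b g = b' g + (v - ρ g v)`. A cocycle grows at most linearly, with slope `C * sup_S ‖b'‖`, so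
`‖b g‖ ≤ C δ |g|_S + (1 + C) ‖v‖` whenever `‖b'‖ ≤ δ` on `S`. As `b` is an almost coboundary,
`δ` can be taken arbitrarily small, and an additive constant is negligible against `ε |g|_S`
once `|g|_S` is large.
-/

open Pointwise

/-- Word length of `g` with respect to a generating set `S`: the least `n` with `g ∈ S^n`. -/
noncomputable def wordLength {G : Type*} [Group G] (S : Set G) (g : G) : ℕ :=
  sInf {n : ℕ | g ∈ S ^ n}

theorem mem_pow_wordLength {G : Type*} [Group G] {S : Set G} (hS : ∀ g : G, ∃ n : ℕ, g ∈ S ^ n)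
    (g : G) : g ∈ S ^ wordLength S g :=
  Nat.sInf_mem (hS g)

theorem exists_le_mul_of_forall_le_mul_add {α : Type*} (f : α → ℝ) (ℓ : α → ℕ)
    (h : ∀ δ : ℝ, 0 < δ → ∃ K : ℝ, ∀ x, f x ≤ δ * ℓ x + K) :
    ∀ ε : ℝ, 0 < ε → ∃ R : ℕ, ∀ x, R ≤ ℓ x → f x ≤ ε * ℓ x := by
  intro ε hε
  obtain ⟨K, hK⟩ := h (ε / 2) (half_pos hε)
  refine ⟨⌈2 * K / ε⌉₊, fun x hx => ?_⟩
  have hKℓ : 2 * K ≤ ε * ℓ x := by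
    rw [← div_le_iff₀' hε]
    exact (Nat.le_ceil _).trans (by exact_mod_cast hx)
  linarith [hK x]

section Cocycle

variable {𝕜 G V : Type*} [NontriviallyNormedField 𝕜] [Group G] [NormedAddCommGroup V]
  [NormedSpace 𝕜 V] (ρ : G →* (V →L[𝕜] V))

def IsCocycle (b : G → V) : Prop :=
  ∀ g h : G, b (g * h) = ρ g (b h) + b g

variable {ρ} {b : G → V}

theorem IsCocycle.map_one (hb : IsCocycle ρ b) : b 1 = 0 := by
  simpa using hb 1 1

theorem IsCocycle.add_coboundary (hb : IsCocycle ρ b) (v : V) :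
    IsCocycle ρ (fun g => ρ g v + b g - v) := by
  intro g h
  simp only [hb g h, map_mul, mul_apply_eq_comp, map_add, map_sub]
  abel

theorem IsCocycle.norm_le_of_mem_pow (hb : IsCocycle ρ b) {C δ : ℝ} (hC : ∀ g, ‖ρ g‖ ≤ C)
    {S : Set G} (hS : ∀ s ∈ S, ‖b s‖ ≤ δ) :
    ∀ n : ℕ, ∀ g ∈ S ^ n, ‖b g‖ ≤ n * (C * δ) := by
  intro n
  induction n with
  | zero =>
    rintro g rfl
    simp [hb.map_one]
  | succ n ih =>
    rw [pow_succ]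
    rintro _ ⟨x, hx, s, hs, rfl⟩
    have hρx : ‖ρ x (b s)‖ ≤ C * δ :=
      ((ρ x).le_opNorm _).trans
        (mul_le_mul (hC x) (hS s hs) (norm_nonneg _) ((norm_nonneg _).trans (hC x)))
    calc ‖b (x * s)‖ ≤ ‖ρ x (b s)‖ + ‖b x‖ := by rw [hb x s]; exact norm_add_le _ _
      _ ≤ C * δ + n * (C * δ) := add_le_add hρx (ih x hx)
      _ = (n + 1 : ℕ) * (C * δ) := by push_cast; ring

theorem IsCocycle.norm_le_mul_wordLength_add (hb : IsCocycle ρ b) {C δ : ℝ}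
    (hC : ∀ g, ‖ρ g‖ ≤ C) {S : Set G} (hSgen : ∀ g : G, ∃ n : ℕ, g ∈ S ^ n) {v : V}
    (hv : ∀ s ∈ S, ‖ρ s v + b s - v‖ ≤ δ) (g : G) :
    ‖b g‖ ≤ C * δ * wordLength S g + (1 + C) * ‖v‖ := by
  have hb' := (hb.add_coboundary v).norm_le_of_mem_pow hC hv _ g (mem_pow_wordLength hSgen g)
  have hρg : ‖ρ g v‖ ≤ C * ‖v‖ := (ρ g).le_of_opNorm_le (hC g) v
  calc ‖b g‖ = ‖(ρ g v + b g - v) + (v - ρ g v)‖ := by congr 1; abel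
    _ ≤ ‖ρ g v + b g - v‖ + (‖v‖ + ‖ρ g v‖) :=
      (norm_add_le _ _).trans (by gcongr; exact norm_sub_le _ _)
    _ ≤ C * δ * wordLength S g + (1 + C) * ‖v‖ := by linarith

end Cocycle

theorem stmt10_general {G V : Type*} [Group G]
    [NormedAddCommGroup V] [NormedSpace ℝ V]
    (S : Set G)
    (hSgen : ∀ g : G, ∃ n : ℕ, g ∈ S ^ n)
    (ρ : G →* (V →L[ℝ] V)) (Cb : ℝ) (hub : ∀ g : G, ‖ρ g‖ ≤ Cb)
    (b : G → V)
    (hcoc : ∀ g h : G, b (g * h) = ρ g (b h) + b g)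
    (hac : ∀ ε : ℝ, 0 < ε → ∃ v : V, ∀ s ∈ S, ‖ρ s v + b s - v‖ ≤ ε) :
    ∀ ε : ℝ, 0 < ε → ∃ R : ℕ, ∀ g : G,
      R ≤ wordLength S g → ‖b g‖ ≤ ε * wordLength S g := by
  refine exists_le_mul_of_forall_le_mul_add (fun g => ‖b g‖) (wordLength S) fun δ hδ => ?_
  set C := max Cb 1
  have hC : ∀ g, ‖ρ g‖ ≤ C := fun g => le_max_of_le_left (hub g)
  have hC0 : 0 < C := lt_max_of_lt_right one_pos
  obtain ⟨v, hv⟩ := hac (δ / C) (div_pos hδ hC0)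
  refine ⟨(1 + C) * ‖v‖, fun g => ?_⟩
  have h := IsCocycle.norm_le_mul_wordLength_add hcoc hC hSgen hv g
  rwa [mul_div_cancel₀ δ hC0.ne'] at h

/-- an almost coboundary is sublinear with respect to the word length. -/
theorem stmt10 {G V : Type*} [Group G] [TopologicalSpace G] [IsTopologicalGroup G]
    [LocallyCompactSpace G]
    [NormedAddCommGroup V] [NormedSpace ℝ V] [CompleteSpace V]
    (S : Set G) (hScomp : IsCompact S) (hS1 : (1 : G) ∈ S) (hSsymm : S⁻¹ = S)
    (hSgen : ∀ g : G, ∃ n : ℕ, g ∈ S ^ n)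
    (ρ : G →* (V →L[ℝ] V)) (Cb : ℝ) (hub : ∀ g : G, ‖ρ g‖ ≤ Cb)
    (b : G → V) (hbcont : Continuous b)
    (hcoc : ∀ g h : G, b (g * h) = ρ g (b h) + b g)
    (hac : ∀ ε : ℝ, 0 < ε → ∃ v : V, ∀ s ∈ S, ‖ρ s v + b s - v‖ ≤ ε) :
    ∀ ε : ℝ, 0 < ε → ∃ R : ℕ, ∀ g : G,
      R ≤ wordLength S g → ‖b g‖ ≤ ε * wordLength S g :=
  stmt10_general S hSgen ρ Cb hub b hcoc hac
end

section
/- Let M be a locally compact group and s a contracting automorphism of M (for every neighborhood V of 1 and compact K ⊆ M, s^n(K) ⊆ V for large n). Assume M is totally disconnected. Then the map f(g) = g · s(g)⁻¹ is a self-homeomorphism of M, with inverse F(g) = g·s(g)·s²(g)·⋯ (the infinite product converging). -/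
/-!
Since `s` is contracting, for every open subgroup `H` and compact set `K` the iterates `sⁿ g`
lie in `H` for all large `n`, uniformly in `g ∈ K`; hence the partial products
`Pₙ g = g · s g ⋯ sⁿ⁻¹ g` eventually stay in the single left coset `P_N g · H`.
By van Dantzig's theorem such `H` can be taken compact and inside any neighbourhood of `1`, so
`(Pₙ)` is uniformly Cauchy on compacta for the left uniformity and converges, inside a compact
coset, to a continuous limit `F`. Passing to the limit in `g · s (Pₙ g) = Pₙ₊₁ g` gives
`F g = g · s (F g)`, and the telescoping identity `Pₙ (g · (s g)⁻¹) = g · (sⁿ g)⁻¹` gives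
`F (g · (s g)⁻¹) = g`.
-/

open Filter Topology Pointwise

section VanDantzig

variable {G : Type*} [Group G] [TopologicalSpace G] [IsTopologicalGroup G]

theorem IsCompact.stabilizer_mem_nhds_one {W : Set G} (hWc : IsCompact W) (hWo : IsOpen W) :
    (MulAction.stabilizer G W : Set G) ∈ 𝓝 1 := by
  obtain ⟨V, hV, hVW⟩ := compact_open_separated_mul_left hWc hWo subset_rfl
  filter_upwards [hV, inv_mem_nhds_one G hV] with g hg hg'
  exact ((Set.smul_set_subset_mul hg).trans hVW).antisymm
    (Set.subset_smul_set_iff.2 ((Set.smul_set_subset_mul (a := g⁻¹) hg').trans hVW))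

theorem exists_isOpen_isCompact_subgroup_subset [LocallyCompactSpace G]
    [TotallyDisconnectedSpace G] {U : Set G} (hU : U ∈ 𝓝 1) :
    ∃ H : Subgroup G, IsOpen (H : Set G) ∧ IsCompact (H : Set G) ∧ (H : Set G) ⊆ U := by
  obtain ⟨K, hK, hKU, hKc⟩ := local_compact_nhds hU
  obtain ⟨W, hWclopen, h1W, hWK⟩ := loc_compact_Haus_tot_disc_of_zero_dim.mem_nhds_iff.1 hK
  have hWc : IsCompact W := hKc.of_isClosed_subset hWclopen.isClosed hWK
  have hHW : (MulAction.stabilizer G W : Set G) ⊆ W := fun g hg => by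
    simpa [show g • W = W from hg] using Set.smul_mem_smul_set (a := g) h1W
  have hHo := Subgroup.isOpen_of_mem_nhds _ (hWc.stabilizer_mem_nhds_one hWclopen.isOpen)
  exact ⟨_, hHo, hWc.of_isClosed_subset (Subgroup.isClosed_of_isOpen _ hHo) hHW,
    hHW.trans (hWK.trans hKU)⟩

end VanDantzig

section PartialProd

variable {G : Type*} [Group G]

def partialProd (s : G → G) (n : ℕ) (g : G) : G :=
  ((List.range n).map fun i => s^[i] g).prod

theorem partialProd_succ (s : G → G) (n : ℕ) (g : G) :
    partialProd s (n + 1) g = partialProd s n g * s^[n] g :=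
  List.prod_range_succ _ n

theorem partialProd_inv_mul_mem {s : G → G} (H : Subgroup G) {N : ℕ} {g : G}
    (hN : ∀ n ≥ N, s^[n] g ∈ H) {m : ℕ} (hm : N ≤ m) :
    (partialProd s N g)⁻¹ * partialProd s m g ∈ H := by
  induction m, hm using Nat.le_induction with
  | base => simp
  | succ m hm ih => simpa [partialProd_succ, ← mul_assoc] using H.mul_mem ih (hN m hm)

variable {F : Type*} [FunLike F G G] [MonoidHomClass F G G]

theorem mul_map_partialProd (s : F) (n : ℕ) (g : G) :
    g * s (partialProd s n g) = partialProd s (n + 1) g := by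
  simp only [partialProd, List.prod_range_succ', map_list_prod, List.map_map,
    Function.iterate_zero_apply, Function.comp_def, Function.iterate_succ_apply']

theorem partialProd_mul_inv_map (s : F) (n : ℕ) (g : G) :
    partialProd s n (g * (s g)⁻¹) = g * (s^[n] g)⁻¹ := by
  simp only [partialProd, ← div_eq_mul_inv, iterate_map_div, ← Function.iterate_succ_apply]
  exact List.prod_range_div' n (fun i => s^[i] g)

theorem continuous_partialProd [TopologicalSpace G] [IsTopologicalGroup G] {s : G → G}
    (hs : Continuous s) (n : ℕ) : Continuous (partialProd s n) := by
  induction n with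
  | zero => exact continuous_const
  | succ n ih => exact (ih.mul (hs.iterate n)).congr fun g => (partialProd_succ s n g).symm

end PartialProd

def IsContracting {G : Type*} [One G] [TopologicalSpace G] (s : G → G) : Prop :=
  ∀ K : Set G, IsCompact K → ∀ U ∈ 𝓝 (1 : G), ∃ N : ℕ, ∀ n ≥ N, ∀ g ∈ K, s^[n] g ∈ U

namespace IsContracting

section Topological

variable {G : Type*} [Group G] [TopologicalSpace G] {s : G → G}

theorem tendsto_iterate (hs : IsContracting s) (g : G) :
    Tendsto (fun n => s^[n] g) atTop (𝓝 1) := fun U hU =>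
  let ⟨N, hN⟩ := hs {g} isCompact_singleton U hU
  mem_atTop_sets.2 ⟨N, fun n hn => hN n hn g rfl⟩

theorem exists_partialProd_inv_mul_mem (hs : IsContracting s) {K : Set G} (hK : IsCompact K)
    (H : Subgroup G) (hH : (H : Set G) ∈ 𝓝 1) :
    ∃ N, ∀ g ∈ K, ∀ m ≥ N, (partialProd s N g)⁻¹ * partialProd s m g ∈ H := by
  obtain ⟨N, hN⟩ := hs K hK _ hH
  exact ⟨N, fun g hg m hm => partialProd_inv_mul_mem H (fun n hn => hN n hn g hg) hm⟩

end Topological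

variable {G : Type*} [Group G] [UniformSpace G] [IsLeftUniformGroup G] [LocallyCompactSpace G]
  [TotallyDisconnectedSpace G] {s : G → G}

theorem uniformCauchySeqOn_partialProd (hs : IsContracting s) {K : Set G} (hK : IsCompact K) :
    UniformCauchySeqOn (partialProd s) atTop K := by
  intro u hu
  rw [uniformity_eq_comap_inv_mul_nhds_one] at hu
  obtain ⟨V, hV, hVu⟩ := hu
  obtain ⟨H, hHo, -, hHV⟩ := exists_isOpen_isCompact_subgroup_subset hV
  obtain ⟨N, hN⟩ := hs.exists_partialProd_inv_mul_mem hK H (hHo.mem_nhds H.one_mem)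
  filter_upwards [prod_mem_prod (Ici_mem_atTop N) (Ici_mem_atTop N)] with ⟨m, n⟩ ⟨hm, hn⟩ g hg
  refine hVu (hHV ?_)
  simpa [mul_assoc] using H.mul_mem (H.inv_mem (hN g hg m hm)) (hN g hg n hn)

theorem exists_tendsto_partialProd (hs : IsContracting s) (g : G) :
    ∃ x, Tendsto (partialProd s · g) atTop (𝓝 x) := by
  obtain ⟨H, hHo, hHc, -⟩ := exists_isOpen_isCompact_subgroup_subset (univ_mem (f := 𝓝 (1 : G)))
  obtain ⟨N, hN⟩ :=
    hs.exists_partialProd_inv_mul_mem isCompact_singleton H (hHo.mem_nhds H.one_mem)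
  have hcoset : ∀ᶠ n in atTop, partialProd s n g ∈ partialProd s N g • (H : Set G) :=
    eventually_atTop.2 ⟨N, fun n hn => (mem_leftCoset_iff _).2 (hN g rfl n hn)⟩
  obtain ⟨x, -, hx⟩ := (hHc.smul (partialProd s N g)).isComplete _
    ((hs.uniformCauchySeqOn_partialProd isCompact_singleton).cauchySeq rfl)
    (le_principal_iff.2 hcoset)
  exact ⟨x, hx⟩

theorem tendstoLocallyUniformly_partialProd (hs : IsContracting s) :
    ∃ F, TendstoLocallyUniformly (partialProd s) F atTop := by
  choose F hF using hs.exists_tendsto_partialProd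
  exact ⟨F, tendstoLocallyUniformly_iff_forall_isCompact.2 fun K hK =>
    (hs.uniformCauchySeqOn_partialProd hK).tendstoUniformlyOn_of_tendsto fun g _ => hF g⟩

end IsContracting

theorem stmt13_general {M : Type*} [Group M] [TopologicalSpace M] [IsTopologicalGroup M]
    [LocallyCompactSpace M] [TotallyDisconnectedSpace M]
    (s : M ≃* M) (hs : Continuous s)
    (hcontr : ∀ K : Set M, IsCompact K → ∀ U ∈ nhds (1 : M),
      ∃ N : ℕ, ∀ n ≥ N, ∀ g ∈ K, (⇑s)^[n] g ∈ U) :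
    ∃ F : M → M, Continuous F ∧
      (∀ g : M, Filter.Tendsto
        (fun n : ℕ => ((List.range n).map (fun i => (⇑s)^[i] g)).prod)
        Filter.atTop (nhds (F g))) ∧
      (∀ g : M, F g * (s (F g))⁻¹ = g) ∧
      (∀ g : M, F (g * (s g)⁻¹) = g) := by
  let := IsTopologicalGroup.leftUniformSpace M
  have : IsLeftUniformGroup M := ⟨rfl⟩
  obtain ⟨F, hF⟩ := IsContracting.tendstoLocallyUniformly_partialProd hcontr
  have hlim (g : M) : Tendsto (partialProd s · g) atTop (𝓝 (F g)) :=
    hF.tendstoLocallyUniformlyOn.tendsto_at (Set.mem_univ g)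
  refine ⟨F, hF.continuous (.of_forall (continuous_partialProd hs)), hlim, fun g => ?_,
    fun g => ?_⟩
  · rw [mul_inv_eq_iff_eq_mul]
    refine tendsto_nhds_unique ((tendsto_add_atTop_iff_nat 1).2 (hlim g)) ?_
    simpa only [Function.comp_def, mul_map_partialProd] using
      ((hs.tendsto _).comp (hlim g)).const_mul g
  · refine tendsto_nhds_unique (hlim _) ?_
    simpa [partialProd_mul_inv_map] using
      ((IsContracting.tendsto_iterate hcontr g).inv.const_mul g)

/-- for a contracting automorphism `s` of a totally disconnected locally
compact group `M`, the map `f(g) = g·s(g)⁻¹` is a self-homeomorphism of `M`, with inverse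
`F(g) = g·s(g)·s²(g)·⋯` (the infinite product converging). -/
theorem stmt13 {M : Type*} [Group M] [TopologicalSpace M] [IsTopologicalGroup M]
    [LocallyCompactSpace M] [TotallyDisconnectedSpace M]
    (s : M ≃* M) (hs : Continuous s) (hs' : Continuous s.symm)
    (hcontr : ∀ K : Set M, IsCompact K → ∀ U ∈ nhds (1 : M),
      ∃ N : ℕ, ∀ n ≥ N, ∀ g ∈ K, (⇑s)^[n] g ∈ U) :
    ∃ F : M → M, Continuous F ∧
      (∀ g : M, Filter.Tendsto
        (fun n : ℕ => ((List.range n).map (fun i => (⇑s)^[i] g)).prod)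
        Filter.atTop (nhds (F g))) ∧
      (∀ g : M, F g * (s (F g))⁻¹ = g) ∧
      (∀ g : M, F (g * (s g)⁻¹) = g) :=
  stmt13_general s hs hcontr
end

section
/- Let G be a compactly generated locally compact group, (V, π) a uniformly bounded Banach G-module, z a central element of G with π(z) having no nonzero fixed vector in a G-invariant complement V₂ of V^{⟨z⟩}, and b ∈ Z¹(G, π). Then the Cesàro averages x_n = (1/n) Σ_{i=0}^{n-1} b(z^i), considered in the component V₂, are almost fixed points for the affine action σ(g)v = π(g)v + b(g) restricted to V₂; more precisely σ(g)x_n − x_n = (1/n) Σ_{i=0}^{n-1} π(z)^i b(g) → 0 whenever the ergodic averages of π(z) on V₂ tend to 0. -/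
open Filter

/-- for a central element `z` whose ergodic averages on the module tend to
zero, the Cesàro averages `x_n = (1/n) Σ_{i<n} b(zⁱ)` of a cocycle `b` are almost fixed
points of the affine action: `σ(g)x_n − x_n = (1/n) Σ_{i<n} π(zⁱ) b(g) → 0`. -/
theorem stmt17 {G V : Type*} [Group G]
    [NormedAddCommGroup V] [NormedSpace ℝ V] [CompleteSpace V]
    (ρ : G →* (V →L[ℝ] V)) (hub : ∃ C : ℝ, ∀ g : G, ‖ρ g‖ ≤ C)
    (z : G) (hz : ∀ g : G, g * z = z * g)
    (hme : ∀ v : V, Tendsto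
      (fun n : ℕ => (n : ℝ)⁻¹ • ∑ i ∈ Finset.range n, ρ (z ^ i) v) atTop (nhds 0))
    (b : G → V) (hcoc : ∀ g h : G, b (g * h) = ρ g (b h) + b g) :
    ∀ g : G,
      (∀ n : ℕ, 1 ≤ n →
        ρ g ((n : ℝ)⁻¹ • ∑ i ∈ Finset.range n, b (z ^ i)) + b g
            - (n : ℝ)⁻¹ • ∑ i ∈ Finset.range n, b (z ^ i)
          = (n : ℝ)⁻¹ • ∑ i ∈ Finset.range n, ρ (z ^ i) (b g)) ∧
      Tendsto (fun n : ℕ =>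
        ρ g ((n : ℝ)⁻¹ • ∑ i ∈ Finset.range n, b (z ^ i)) + b g
          - (n : ℝ)⁻¹ • ∑ i ∈ Finset.range n, b (z ^ i)) atTop (nhds 0) := by
  intro g
  have hcomm : ∀ i : ℕ, g * z ^ i = z ^ i * g := fun i => by
    have h : Commute g z := hz g
    exact (h.pow_right i).eq
  have key : ∀ i : ℕ, ρ g (b (z ^ i)) = ρ (z ^ i) (b g) + b (z ^ i) - b g := by
    intro i
    have h1 := hcoc g (z ^ i)
    have h2 := hcoc (z ^ i) g
    rw [hcomm i, h2] at h1
    exact eq_sub_of_add_eq h1.symm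
  have heq : ∀ n : ℕ, 1 ≤ n →
      ρ g ((n : ℝ)⁻¹ • ∑ i ∈ Finset.range n, b (z ^ i)) + b g
          - (n : ℝ)⁻¹ • ∑ i ∈ Finset.range n, b (z ^ i)
        = (n : ℝ)⁻¹ • ∑ i ∈ Finset.range n, ρ (z ^ i) (b g) := by
    intro n hn
    have hn0 : (n : ℝ) ≠ 0 := Nat.cast_ne_zero.mpr (by omega)
    rw [map_smul, map_sum]
    have : ∑ i ∈ Finset.range n, ρ g (b (z ^ i))
        = (∑ i ∈ Finset.range n, ρ (z ^ i) (b g))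
          + (∑ i ∈ Finset.range n, b (z ^ i)) - (n : ℝ) • b g := by
      simp only [key]
      rw [Finset.sum_sub_distrib, Finset.sum_add_distrib, Finset.sum_const,
        Finset.card_range, ← Nat.cast_smul_eq_nsmul ℝ]
    rw [this, smul_sub, smul_add, smul_smul, inv_mul_cancel₀ hn0, one_smul]
    abel
  refine ⟨heq, ?_⟩
  refine (hme (b g)).congr' ?_
  filter_upwards [eventually_ge_atTop 1] with n hn
  exact (heq n hn).symm
end

section
/- Let G be a locally compact group, H a closed normal cocompact subgroup with G = P·H for a relatively compact measurable section P of G/H, (V, π) a uniformly bounded Banach G-module, and b ∈ Z¹(G, V). If b is an almost coboundary in restriction to H, then b is an almost coboundary on G. -/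
/-!
Let `K = closure P` and pick `v` almost fixed by the compact piece `(K⁻¹K ∪ K⁻¹QK) ∩ H` of `H`.
On `K` the orbit map `x ↦ x • v` of the affine action is then uniformly close to a function of
the coset `xH` alone, which may be taken to be a simple function `f` on the compact group `G ⧸ H`.
For `g ∈ Q` one has `g • f(d) ≈ f(gd)`, so averaging `f` against the invariant probability measure
of `G ⧸ H` produces a vector moved little by every `g ∈ Q`.
-/

open MeasureTheory Set
open scoped Pointwise

theorem MeasureTheory.SimpleFunc.exists_forall_mem_biUnion {X ι : Type*} [MeasurableSpace X]
    [Nonempty ι] {U : ι → Set X} (hU : ∀ i, MeasurableSet (U i)) (t : Finset ι) :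
    ∃ σ : SimpleFunc X ι, ∀ x ∈ ⋃ i ∈ t, U i, x ∈ U (σ x) := by
  classical
  induction t using Finset.induction_on with
  | empty => exact ⟨SimpleFunc.const X (Classical.arbitrary ι), by simp⟩
  | insert i t _ ih =>
    obtain ⟨σ, hσ⟩ := ih
    refine ⟨SimpleFunc.piecewise (U i) (hU i) (SimpleFunc.const X i) σ, fun x hx => ?_⟩
    by_cases hxi : x ∈ U i
    · simp [SimpleFunc.piecewise_apply, hxi]
    · rw [SimpleFunc.piecewise_apply, if_neg hxi]
      exact hσ x (by simpa [hxi] using hx)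

theorem MeasureTheory.SimpleFunc.exists_forall_mem_of_isOpen_cover {X ι : Type*}
    [TopologicalSpace X] [CompactSpace X] [MeasurableSpace X] [OpensMeasurableSpace X]
    [Nonempty ι] {U : ι → Set X} (hU : ∀ i, IsOpen (U i)) (hcover : ⋃ i, U i = univ) :
    ∃ σ : SimpleFunc X ι, ∀ x, x ∈ U (σ x) := by
  obtain ⟨t, ht⟩ := isCompact_univ.elim_finite_subcover U hU hcover.ge
  obtain ⟨σ, hσ⟩ := exists_forall_mem_biUnion (fun i => (hU i).measurableSet) t
  exact ⟨σ, fun x => hσ x (ht (mem_univ x))⟩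

theorem QuotientGroup.exists_isOpen_forall_mem_of_inter_subset {G : Type*} [Group G]
    [TopologicalSpace G] [IsTopologicalGroup G] {H : Subgroup G} [H.Normal]
    [IsClosed (H : Set G)] {K O : Set G} (hK : IsCompact K) (hO : IsOpen O)
    (hKO : K ∩ H ⊆ O) :
    ∃ W : Set (G ⧸ H), IsOpen W ∧ (1 : G ⧸ H) ∈ W ∧ ∀ x ∈ K, (x : G ⧸ H) ∈ W → x ∈ O := by
  refine ⟨(QuotientGroup.mk '' (K \ O))ᶜ,
    ((hK.diff hO).image QuotientGroup.continuous_mk).isClosed.isOpen_compl, ?_, ?_⟩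
  · rintro ⟨x, ⟨hxK, hxO⟩, hx1⟩
    exact hxO (hKO ⟨hxK, (QuotientGroup.eq_one_iff x).1 hx1⟩)
  · intro x hxK hxW
    by_contra hxO
    exact hxW ⟨x, ⟨hxK, hxO⟩, rfl⟩

theorem exists_isProbabilityMeasure_isMulLeftInvariant (Γ : Type*) [Group Γ]
    [TopologicalSpace Γ] [IsTopologicalGroup Γ] [CompactSpace Γ] [MeasurableSpace Γ]
    [BorelSpace Γ] : ∃ ν : Measure Γ, IsProbabilityMeasure ν ∧ ν.IsMulLeftInvariant := by
  refine ⟨Measure.haarMeasure ⊤, ⟨?_⟩, inferInstance⟩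
  have h := Measure.haarMeasure_self (K₀ := (⊤ : TopologicalSpace.PositiveCompacts Γ))
  rwa [TopologicalSpace.PositiveCompacts.coe_top] at h

theorem norm_map_integral_add_sub_integral_le {Γ V : Type*} [Group Γ] [MeasurableSpace Γ]
    [MeasurableMul Γ] [NormedAddCommGroup V] [NormedSpace ℝ V] [CompleteSpace V]
    {ν : Measure Γ} [IsProbabilityMeasure ν] [ν.IsMulLeftInvariant] (A : V →L[ℝ] V) (c : V)
    (γ : Γ) {f : Γ → V} (hf : Integrable f ν) {ε : ℝ}
    (hε : ∀ d, ‖A (f d) + c - f (γ * d)‖ ≤ ε) :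
    ‖A (∫ d, f d ∂ν) + c - ∫ d, f d ∂ν‖ ≤ ε := by
  have hfγ : Integrable (fun d => f (γ * d)) ν :=
    ((measurePreserving_mul_left ν γ).integrable_comp hf.aestronglyMeasurable).2 hf
  have hint : ∫ d, (A (f d) + c - f (γ * d)) ∂ν = A (∫ d, f d ∂ν) + c - ∫ d, f d ∂ν := by
    rw [integral_sub (f := fun d => A (f d) + c)
      ((A.integrable_comp hf).add (integrable_const c)) hfγ,
      integral_add (A.integrable_comp hf) (integrable_const c), integral_const, probReal_univ,
      one_smul, A.integral_comp_comm hf, integral_mul_left_eq_self f γ]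
  rw [← hint]
  simpa using norm_integral_le_of_norm_le_const (μ := ν) (Filter.Eventually.of_forall hε)

section AffineAction

variable {G V : Type*} [Group G] [NormedAddCommGroup V] [NormedSpace ℝ V]

def affineAct (ρ : G →* (V →L[ℝ] V)) (b : G → V) (g : G) (w : V) : V := ρ g w + b g

variable {ρ : G →* (V →L[ℝ] V)} {b : G → V}

theorem affineAct_mul (hcoc : ∀ g h : G, b (g * h) = ρ g (b h) + b g) (g h : G) (w : V) :
    affineAct ρ b (g * h) w = affineAct ρ b g (affineAct ρ b h w) := by
  simp only [affineAct, hcoc, map_mul, mul_apply_eq_comp, map_add]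
  abel

theorem norm_affineAct_sub_affineAct_le {g : G} {C : ℝ} (hg : ‖ρ g‖ ≤ C) (w w' : V) :
    ‖affineAct ρ b g w - affineAct ρ b g w'‖ ≤ C * ‖w - w'‖ := by
  calc ‖affineAct ρ b g w - affineAct ρ b g w'‖ = ‖ρ g (w - w')‖ := by
        simp only [affineAct, map_sub, add_sub_add_right_eq_sub]
    _ ≤ C * ‖w - w'‖ :=
        ((ρ g).le_opNorm _).trans (mul_le_mul_of_nonneg_right hg (norm_nonneg _))

theorem continuous_affineAct_apply [TopologicalSpace G] (hρ : ∀ w : V, Continuous fun g => ρ g w)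
    (hb : Continuous b) (w : V) : Continuous fun g => affineAct ρ b g w :=
  (hρ w).add hb

end AffineAction

section Quotient

variable {G V : Type*} [Group G] [NormedAddCommGroup V] [NormedSpace ℝ V] {H : Subgroup G}
  [H.Normal] {ρ : G →* (V →L[ℝ] V)} {b : G → V} {C δ : ℝ} {K : Set G} {v : V}

theorem norm_affineAct_sub_le_of_forall_norm_sub_le
    (hcoc : ∀ g h : G, b (g * h) = ρ g (b h) + b g) (hC : ∀ g, ‖ρ g‖ ≤ C)
    (hKH : ∀ c : G ⧸ H, ∃ x ∈ K, (x : G ⧸ H) = c) {f : G ⧸ H → V} {η : ℝ}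
    (hf : ∀ x ∈ K, ‖f x - affineAct ρ b x v‖ ≤ η) {Q : Set G}
    (hv : ∀ h ∈ K⁻¹ * (Q * K) ∩ H, ‖affineAct ρ b h v - v‖ ≤ δ) {g : G} (hg : g ∈ Q)
    (d : G ⧸ H) : ‖affineAct ρ b g (f d) - f (g * d)‖ ≤ C * η + C * δ + η := by
  obtain ⟨x, hxK, rfl⟩ := hKH d
  obtain ⟨x', hx'K, hx'⟩ := hKH (g * x)
  set h := x'⁻¹ * (g * x)
  have hH : h ∈ H := by
    rw [← QuotientGroup.eq_one_iff]
    simp [h, hx']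
  have hgx : g * x = x' * h := by simp [h]
  rw [← hx']
  calc ‖affineAct ρ b g (f x) - f x'‖
      ≤ ‖affineAct ρ b g (f x) - affineAct ρ b g (affineAct ρ b x v)‖
        + ‖affineAct ρ b x' (affineAct ρ b h v) - affineAct ρ b x' v‖
        + ‖affineAct ρ b x' v - f x'‖ := by
        rw [← affineAct_mul hcoc, ← affineAct_mul hcoc, ← hgx]
        simpa only [dist_eq_norm] using dist_triangle4 (α := V) _ _ _ _
    _ ≤ C * η + C * δ + η := by
        gcongr
        · exact (norm_affineAct_sub_affineAct_le (hC g) _ _).trans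
            (mul_le_mul_of_nonneg_left (hf x hxK) ((norm_nonneg _).trans (hC 1)))
        · exact (norm_affineAct_sub_affineAct_le (hC x') _ _).trans
            (mul_le_mul_of_nonneg_left (hv h ⟨mul_mem_mul (inv_mem_inv.2 hx'K)
              (mul_mem_mul hg hxK), hH⟩) ((norm_nonneg _).trans (hC 1)))
        · rw [norm_sub_rev]; exact hf x' hx'K

theorem exists_simpleFunc_norm_sub_affineAct_le [TopologicalSpace G] [IsTopologicalGroup G]
    [IsClosed (H : Set G)] [MeasurableSpace (G ⧸ H)] [OpensMeasurableSpace (G ⧸ H)]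
    [CompactSpace (G ⧸ H)]
    (hcoc : ∀ g h : G, b (g * h) = ρ g (b h) + b g) (hC : ∀ g, ‖ρ g‖ ≤ C)
    (hρ : ∀ w : V, Continuous fun g => ρ g w) (hb : Continuous b) (hK : IsCompact K)
    (hKH : ∀ c : G ⧸ H, ∃ x ∈ K, (x : G ⧸ H) = c)
    (hv : ∀ h ∈ K⁻¹ * K ∩ H, ‖affineAct ρ b h v - v‖ < δ) :
    ∃ f : SimpleFunc (G ⧸ H) V, ∀ x ∈ K, ‖f x - affineAct ρ b x v‖ ≤ C * δ := by
  have hC0 : 0 ≤ C := (norm_nonneg _).trans (hC 1)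
  obtain ⟨W, hWo, hW1, hW⟩ := QuotientGroup.exists_isOpen_forall_mem_of_inter_subset
    (hK.inv.mul hK) (isOpen_lt ((continuous_affineAct_apply hρ hb v).sub continuous_const).norm
      continuous_const) hv
  -- a section `G ⧸ H → G` need not be measurable; `σ` uses only finitely many representatives
  choose rep hrepK hrep using hKH
  obtain ⟨σ, hσ⟩ := SimpleFunc.exists_forall_mem_of_isOpen_cover
    (U := fun c : G ⧸ H => (c⁻¹ * ·) ⁻¹' W) (fun c => hWo.preimage (continuous_const_mul _))
    (eq_univ_of_forall fun c => mem_iUnion.2 ⟨c, by simpa using hW1⟩)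
  refine ⟨σ.map fun c => affineAct ρ b (rep c) v, fun x hx => ?_⟩
  set y := rep (σ x)
  have hyx : y⁻¹ * x ∈ K⁻¹ * K := mul_mem_mul (inv_mem_inv.2 (hrepK _)) hx
  have hyxW : ((y⁻¹ * x : G) : G ⧸ H) ∈ W := by
    simpa [y, hrep] using hσ x
  have hyxO := hW _ hyx hyxW
  calc ‖affineAct ρ b y v - affineAct ρ b x v‖
      = ‖affineAct ρ b y v - affineAct ρ b y (affineAct ρ b (y⁻¹ * x) v)‖ := by
        rw [← affineAct_mul hcoc, mul_inv_cancel_left]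
    _ ≤ C * ‖v - affineAct ρ b (y⁻¹ * x) v‖ := norm_affineAct_sub_affineAct_le (hC y) _ _
    _ ≤ C * δ := by
        rw [norm_sub_rev]
        exact mul_le_mul_of_nonneg_left hyxO.le hC0

end Quotient

theorem stmt19_general {G V : Type*} [Group G] [TopologicalSpace G] [IsTopologicalGroup G]
    [NormedAddCommGroup V] [NormedSpace ℝ V] [CompleteSpace V]
    (H : Subgroup G) [H.Normal] (hHclosed : IsClosed (H : Set G))
    (P : Set G) (hPbdd : IsCompact (closure P))
    (hsection : ∀ g : G, ∃ p ∈ P, ∃ h ∈ H, g = p * h)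
    (ρ : G →* (V →L[ℝ] V)) (hcont : ∀ v : V, Continuous fun g => ρ g v)
    (hub : ∃ C : ℝ, ∀ g : G, ‖ρ g‖ ≤ C)
    (b : G → V) (hbcont : Continuous b)
    (hcoc : ∀ g h : G, b (g * h) = ρ g (b h) + b g)
    (hHac : ∀ ε : ℝ, 0 < ε → ∀ Q : Set G, Q ⊆ (H : Set G) → IsCompact Q →
      ∃ v : V, ∀ h ∈ Q, ‖ρ h v + b h - v‖ ≤ ε) :
    ∀ ε : ℝ, 0 < ε → ∀ Q : Set G, IsCompact Q →
      ∃ v : V, ∀ g ∈ Q, ‖ρ g v + b g - v‖ ≤ ε := by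
  intro ε hε Q hQ
  obtain ⟨C, hC⟩ := hub
  have : IsClosed (H : Set G) := hHclosed
  set K := closure P
  have hKH : ∀ c : G ⧸ H, ∃ x ∈ K, (x : G ⧸ H) = c := by
    rintro ⟨g⟩
    obtain ⟨p, hp, h, hh, rfl⟩ := hsection g
    exact ⟨p, subset_closure hp, QuotientGroup.eq.2 (by simpa using hh)⟩
  have hKuniv : (QuotientGroup.mk '' K : Set (G ⧸ H)) = univ :=
    eq_univ_of_forall fun c => (hKH c).imp fun _ ⟨hx, e⟩ => ⟨hx, e⟩
  have : CompactSpace (G ⧸ H) := ⟨hKuniv ▸ hPbdd.image QuotientGroup.continuous_mk⟩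
  borelize (G ⧸ H)
  obtain ⟨ν, _, _⟩ := exists_isProbabilityMeasure_isMulLeftInvariant (G ⧸ H)
  obtain ⟨δ, hδ, hδε⟩ := exists_pos_mul_lt hε (C ^ 2 + 2 * C)
  obtain ⟨v, hv⟩ := hHac (δ / 2) (half_pos hδ) ((K⁻¹ * K ∪ K⁻¹ * (Q * K)) ∩ H)
    inter_subset_right (((hPbdd.inv.mul hPbdd).union (hPbdd.inv.mul (hQ.mul hPbdd))).inter_right
      hHclosed)
  obtain ⟨f, hf⟩ := exists_simpleFunc_norm_sub_affineAct_le hcoc hC hcont hbcont hPbdd hKH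
    fun h hh => (hv h ⟨Or.inl hh.1, hh.2⟩).trans_lt (half_lt_self hδ)
  refine ⟨∫ d, f d ∂ν, fun g hg => norm_map_integral_add_sub_integral_le (ρ g) (b g) (g : G ⧸ H)
    f.integrable_of_isFiniteMeasure fun d => ?_⟩
  calc _ ≤ C * (C * δ) + C * δ + C * δ := norm_affineAct_sub_le_of_forall_norm_sub_le hcoc hC hKH
        hf (fun h hh => (hv h ⟨Or.inr hh.1, hh.2⟩).trans (half_le_self hδ.le)) hg d
    _ ≤ ε := by linarith

/-- let `H` be a closed normal cocompact subgroup of a locally compact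
group `G`, with a relatively compact measurable section `P` (so `G = P·H`). If a continuous
1-cocycle `b` on a uniformly bounded Banach `G`-module is an almost coboundary in
restriction to `H`, then it is an almost coboundary on `G`. -/
theorem stmt19 {G V : Type*} [Group G] [TopologicalSpace G] [IsTopologicalGroup G]
    [LocallyCompactSpace G] [MeasurableSpace G] [BorelSpace G]
    (μ : Measure G) [μ.IsHaarMeasure]
    [NormedAddCommGroup V] [NormedSpace ℝ V] [CompleteSpace V]
    (H : Subgroup G) [H.Normal] (hHclosed : IsClosed (H : Set G))
    (P : Set G) (hPmeas : MeasurableSet P) (hPbdd : IsCompact (closure P))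
    (hsection : ∀ g : G, ∃ p ∈ P, ∃ h ∈ H, g = p * h)
    (ρ : G →* (V →L[ℝ] V)) (hcont : ∀ v : V, Continuous fun g => ρ g v)
    (hub : ∃ C : ℝ, ∀ g : G, ‖ρ g‖ ≤ C)
    (b : G → V) (hbcont : Continuous b)
    (hcoc : ∀ g h : G, b (g * h) = ρ g (b h) + b g)
    (hHac : ∀ ε : ℝ, 0 < ε → ∀ Q : Set G, Q ⊆ (H : Set G) → IsCompact Q →
      ∃ v : V, ∀ h ∈ Q, ‖ρ h v + b h - v‖ ≤ ε) :
    ∀ ε : ℝ, 0 < ε → ∀ Q : Set G, IsCompact Q →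
      ∃ v : V, ∀ g ∈ Q, ‖ρ g v + b g - v‖ ≤ ε :=
  stmt19_general H hHclosed P hPbdd hsection ρ hcont hub b hbcont hcoc hHac
end
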